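/- arXiv:1105.2142 — 2 statements merged into one kernel-verified Lean document; each statement's English description precedes it below -/
import Mathlib

section
/- Fix n ≥ 1 and a nonzero y ∈ ℝⁿ. The symbol σ¹ of the projective metrizability operator P₁ = (L_C, d_J, d_h) is involutive: there exists a basis e₁,…,e₂ₙ of W which is quasi-regular, i.e., dim g² = dim g¹ + Σ_{j=1}^{2n} dim g¹_{e₁,…,e_j}. Explicitly, if ε₁,…,εₙ is a basis of ℝⁿ with εₙ = y, then the basis given by e_j = (ε_j, ε_{j−1}) for 1 ≤ j ≤ n (with ε₀ = 0) and e_{n+j} = (0, ε_j) for 1 ≤ j ≤ n is quasi-regular; moreover dim g¹_{e₁,…,e_j} = n(n−j) for 1 ≤ j ≤ n and dim g¹_{e₁,…,e_{n+j}} = 0 for 1 ≤ j ≤ n. -/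
namespace PM

/-- `ℝⁿ`. -/
abbrev Vn (n : ℕ) := Fin n → ℝ
/-- `W = ℝⁿ ⊕ ℝⁿ` (horizontal ⊕ vertical directions). -/
abbrev W (n : ℕ) := Vn n × Vn n
/-- Index set for a basis of `W`: `inl` = horizontal, `inr` = vertical. -/
abbrev Idx (n : ℕ) := Fin n ⊕ Fin n

/-- `g¹ = ker σ¹`: in coordinates, an element of `W*⊗(ℝⁿ)*` is
`A : Idx n → Fin n → ℝ`, and `A ∈ g¹` iff `i_C A = 0`, `τ_J A = 0`,
`τ_h A = 0` (with `C = (0, y)`). -/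
def g1 {n : ℕ} (y : Vn n) : Submodule ℝ (Idx n → Fin n → ℝ) where
  carrier := {A | (∀ j, (∑ i, y i * A (Sum.inr i) j) = 0) ∧
    (∀ i j, A (Sum.inr i) j = A (Sum.inr j) i) ∧
    (∀ i j, A (Sum.inl i) j = A (Sum.inl j) i)}
  add_mem' := by
    rintro A B ⟨hA1, hA2, hA3⟩ ⟨hB1, hB2, hB3⟩
    refine ⟨fun j => ?_, fun i j => ?_, fun i j => ?_⟩
    · simp [mul_add, Finset.sum_add_distrib, hA1 j, hB1 j]
    · simp [hA2 i j, hB2 i j]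
    · simp [hA3 i j, hB3 i j]
  zero_mem' := ⟨fun j => by simp, fun i j => rfl, fun i j => rfl⟩
  smul_mem' := by
    rintro c A ⟨hA1, hA2, hA3⟩
    refine ⟨fun j => ?_, fun i j => ?_, fun i j => ?_⟩
    · simp only [Pi.smul_apply, smul_eq_mul, mul_left_comm, ← Finset.mul_sum, hA1 j, mul_zero]
    · simp [hA2 i j]
    · simp [hA3 i j]

/-- `g² = ker σ²`: in coordinates, an element of `S²W*⊗(ℝⁿ)*` is a symmetric
`B : Idx n → Idx n → Fin n → ℝ`, and `B ∈ g²` iff `σ¹(B(w,·)) = 0` for all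
`w`, i.e. `B w ∈ g¹` for every index `w`. -/
def g2 {n : ℕ} (y : Vn n) : Submodule ℝ (Idx n → Idx n → Fin n → ℝ) where
  carrier := {B | (∀ a b, B a b = B b a) ∧ ∀ a, B a ∈ g1 y}
  add_mem' := by
    rintro A B ⟨hA1, hA2⟩ ⟨hB1, hB2⟩
    exact ⟨fun a b => by simp [hA1 a b, hB1 a b],
      fun a => (g1 y).add_mem (hA2 a) (hB2 a)⟩
  zero_mem' := ⟨fun a b => rfl, fun a => (g1 y).zero_mem⟩
  smul_mem' := by
    rintro c B ⟨h1, h2⟩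
    exact ⟨fun a b => by simp [h1 a b], fun a => (g1 y).smul_mem c (h2 a)⟩


/-- The kernel of evaluation at `e ∈ W`: covectors `A` with `A(e) = 0`. -/
def evKer {n : ℕ} (e : W n) : Submodule ℝ (Idx n → Fin n → ℝ) where
  carrier := {A | ∀ j,
    (∑ i, e.1 i * A (Sum.inl i) j) + (∑ i, e.2 i * A (Sum.inr i) j) = 0}
  add_mem' := by
    intro A B hA hB j
    have hA' := hA j
    have hB' := hB j
    simp only [Pi.add_apply, mul_add, Finset.sum_add_distrib] at *
    linarith
  zero_mem' := by intro j; simp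
  smul_mem' := by
    intro c A hA j
    have hA' := hA j
    simp only [Pi.smul_apply, smul_eq_mul, mul_left_comm, ← Finset.mul_sum, ← mul_add, hA',
      mul_zero]

/-- The explicit candidate quasi-regular basis of `W`: for `1 ≤ j ≤ n`,
`e_j = (ε_j, ε_{j−1})` (with `ε₀ = 0`), and `e_{n+j} = (0, ε_j)`
(`0`-indexed in Lean). -/
noncomputable def elist {n : ℕ} (ε : Fin n → Vn n) (k : Fin (2 * n)) : W n :=
  if h : (k : ℕ) < n then
    (ε ⟨(k : ℕ), h⟩, if h0 : 0 < (k : ℕ) then ε ⟨(k : ℕ) - 1, by omega⟩ else 0)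
  else
    (0, ε ⟨(k : ℕ) - n, by have := k.isLt; omega⟩)

/-- `g¹_{e₁,…,e_m}` for the first `m` vectors of `elist ε`. -/
noncomputable def g1pref {n : ℕ} (y : Vn n) (ε : Fin n → Vn n) (m : ℕ) :
    Submodule ℝ (Idx n → Fin n → ℝ) :=
  g1 y ⊓ ⨅ (k : Fin (2 * n)) (_ : (k : ℕ) < m), evKer (elist ε k)

noncomputable section Conj
variable {n : ℕ}

def opL (M : Fin n → Fin n → ℝ) (X : Fin n → ℝ) (b : Fin n) : ℝ := ∑ j, M b j * X j

def dsum (M : Fin n → Fin n → ℝ) (Z : Fin n → Fin n → ℝ) (a b : Fin n) : ℝ :=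
  ∑ i, M a i * opL M (Z i) b

def tsum3 (M : Fin n → Fin n → ℝ) (X : Fin n → Fin n → Fin n → ℝ) (a b c : Fin n) : ℝ :=
  ∑ i, M a i * dsum M (X i) b c

def isInv (M Nv : Fin n → Fin n → ℝ) : Prop :=
  ∀ i j, (∑ a, Nv i a * M a j) = if i = j then 1 else 0

lemma mul_sum_comm (f : Fin n → ℝ) (k : Fin n → ℝ) (g : Fin n → Fin n → ℝ) :
    ∑ i, f i * ∑ p, k p * g i p = ∑ p, k p * ∑ i, f i * g i p := by
  simp_rw [Finset.mul_sum]
  rw [Finset.sum_comm]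
  exact Finset.sum_congr rfl fun p _ => Finset.sum_congr rfl fun i _ => by ring

lemma opL_sum (P : Fin n → Fin n → ℝ) (c : Fin n → ℝ) (F : Fin n → Fin n → ℝ) (j : Fin n) :
    opL P (fun b => ∑ i, c i * F i b) j = ∑ i, c i * opL P (F i) j :=
  mul_sum_comm _ _ _

lemma opL_opL {M Nv : Fin n → Fin n → ℝ} (h : isInv M Nv) (X : Fin n → ℝ) (i : Fin n) :
    opL Nv (opL M X) i = X i := by
  unfold opL
  calc ∑ a, Nv i a * ∑ j, M a j * X j
      = ∑ j, (∑ a, Nv i a * M a j) * X j := by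
        simp_rw [Finset.mul_sum, Finset.sum_mul]
        rw [Finset.sum_comm]
        exact Finset.sum_congr rfl fun p _ => Finset.sum_congr rfl fun q _ => by ring
    _ = X i := by simp [h i, ite_mul, Finset.sum_ite_eq]

lemma dsum_dsum {M Nv : Fin n → Fin n → ℝ} (h : isInv M Nv) (Z : Fin n → Fin n → ℝ)
    (i₀ j₀ : Fin n) : dsum Nv (dsum M Z) i₀ j₀ = Z i₀ j₀ := by
  have key : ∀ a, opL Nv (dsum M Z a) j₀ = ∑ i, M a i * Z i j₀ := by
    intro a
    have : opL Nv (fun b => ∑ i, M a i * opL M (Z i) b) j₀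
        = ∑ i, M a i * opL Nv (opL M (Z i)) j₀ := opL_sum _ _ _ _
    simp only [opL_opL h] at this
    exact this
  show ∑ a, Nv i₀ a * opL Nv (dsum M Z a) j₀ = _
  simp_rw [key]
  exact opL_opL h (fun i => Z i j₀) i₀

lemma dsum_sum (P : Fin n → Fin n → ℝ) (c : Fin n → ℝ) (F : Fin n → Fin n → Fin n → ℝ)
    (b d : Fin n) :
    dsum P (fun x y => ∑ p, c p * F p x y) b d = ∑ p, c p * dsum P (F p) b d := by
  unfold dsum
  calc ∑ i, P b i * opL P (fun y => ∑ p, c p * F p i y) d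
      = ∑ i, P b i * ∑ p, c p * opL P (fun y => F p i y) d := by
        exact Finset.sum_congr rfl fun i _ => by rw [opL_sum P c (fun p y => F p i y) d]
    _ = ∑ p, c p * ∑ i, P b i * opL P (fun y => F p i y) d := mul_sum_comm _ _ _

lemma tsum3_tsum3 {M Nv : Fin n → Fin n → ℝ} (h : isInv M Nv)
    (X : Fin n → Fin n → Fin n → ℝ) (a b c : Fin n) :
    tsum3 Nv (fun i i' j => tsum3 M X i i' j) a b c = X a b c := by
  unfold tsum3
  calc ∑ i, Nv a i * dsum Nv (fun i' j => ∑ p, M i p * dsum M (X p) i' j) b c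
      = ∑ i, Nv a i * ∑ p, M i p * dsum Nv (dsum M (X p)) b c := by
        exact Finset.sum_congr rfl fun i _ => by rw [dsum_sum]
    _ = ∑ i, Nv a i * ∑ p, M i p * X p b c := by
        simp_rw [fun p => dsum_dsum h (X p) b c]
    _ = X a b c := opL_opL h (fun p => X p b c) a

def retag (w : Idx n) (i : Fin n) : Idx n := match w with
  | .inl _ => .inl i
  | .inr _ => .inr i

def pos (w : Idx n) : Fin n := match w with
  | .inl a => a
  | .inr a => a

@[simp] lemma retag_retag (w : Idx n) (i j : Fin n) : retag (retag w i) j = retag w j := by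
  cases w <;> rfl

@[simp] lemma pos_retag (w : Idx n) (i : Fin n) : pos (retag w i) = i := by cases w <;> rfl

@[simp] lemma retag_pos (w : Idx n) : retag w (pos w) = w := by cases w <;> rfl

def conjAfun (M : Fin n → Fin n → ℝ) (A : Idx n → Fin n → ℝ) : Idx n → Fin n → ℝ :=
  fun w b => dsum M (fun i j => A (retag w i) j) (pos w) b

def conjBfun (M : Fin n → Fin n → ℝ) (B : Idx n → Idx n → Fin n → ℝ) :
    Idx n → Idx n → Fin n → ℝ :=
  fun w1 w2 c =>
    tsum3 M (fun i i' j => B (retag w1 i) (retag w2 i') j) (pos w1) (pos w2) c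

lemma conjAfun_conjAfun {M Nv : Fin n → Fin n → ℝ} (h : isInv M Nv) (A : Idx n → Fin n → ℝ) :
    conjAfun Nv (conjAfun M A) = A := by
  funext w b
  show dsum Nv (fun i j => conjAfun M A (retag w i) j) (pos w) b = _
  have : (fun i j => conjAfun M A (retag w i) j)
      = dsum M (fun i j => A (retag w i) j) := by
    funext i j
    show dsum M (fun p q => A (retag (retag w i) p) q) (pos (retag w i)) j = _
    simp only [retag_retag, pos_retag]
  rw [this, dsum_dsum h]
  simp only [retag_pos]

lemma conjBfun_conjBfun {M Nv : Fin n → Fin n → ℝ} (h : isInv M Nv)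
    (B : Idx n → Idx n → Fin n → ℝ) : conjBfun Nv (conjBfun M B) = B := by
  funext w1 w2 c
  show tsum3 Nv (fun i i' j => conjBfun M B (retag w1 i) (retag w2 i') j) (pos w1) (pos w2) c = _
  have : (fun i i' j => conjBfun M B (retag w1 i) (retag w2 i') j)
      = fun i i' j => tsum3 M (fun p p' q => B (retag w1 p) (retag w2 p') q) i i' j := by
    funext i i' j
    show tsum3 M (fun p p' q => B (retag (retag w1 i) p) (retag (retag w2 i') p') q)
      (pos (retag w1 i)) (pos (retag w2 i')) j = _
    simp only [retag_retag, pos_retag]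
  rw [this, tsum3_tsum3 h]
  simp only [retag_pos]

def conjL (M : Fin n → Fin n → ℝ) : (Idx n → Fin n → ℝ) →ₗ[ℝ] (Idx n → Fin n → ℝ) where
  toFun := conjAfun M
  map_add' A B := by
    funext w b
    simp only [conjAfun, dsum, opL, Pi.add_apply, mul_add, Finset.sum_add_distrib]
  map_smul' c A := by
    funext w b
    simp only [conjAfun, dsum, opL, Pi.smul_apply, smul_eq_mul, RingHom.id_apply,
      Finset.mul_sum]
    exact Finset.sum_congr rfl fun i _ => Finset.sum_congr rfl fun j _ => by ring

def conjBL (M : Fin n → Fin n → ℝ) :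
    (Idx n → Idx n → Fin n → ℝ) →ₗ[ℝ] (Idx n → Idx n → Fin n → ℝ) where
  toFun := conjBfun M
  map_add' A B := by
    funext w1 w2 c
    simp only [conjBfun, tsum3, dsum, opL, Pi.add_apply, mul_add, Finset.sum_add_distrib]
  map_smul' r A := by
    funext w1 w2 c
    simp only [conjBfun, tsum3, dsum, opL, Pi.smul_apply, smul_eq_mul, RingHom.id_apply,
      Finset.mul_sum]
    exact Finset.sum_congr rfl fun i _ => Finset.sum_congr rfl fun p _ =>
      Finset.sum_congr rfl fun q _ => by ring

def conjE {M Nv : Fin n → Fin n → ℝ} (h : isInv M Nv) (h' : isInv Nv M) :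
    (Idx n → Fin n → ℝ) ≃ₗ[ℝ] (Idx n → Fin n → ℝ) :=
  LinearEquiv.ofLinear (conjL M) (conjL Nv)
    (LinearMap.ext fun A => conjAfun_conjAfun h' A)
    (LinearMap.ext fun A => conjAfun_conjAfun h A)

def conjBE {M Nv : Fin n → Fin n → ℝ} (h : isInv M Nv) (h' : isInv Nv M) :
    (Idx n → Idx n → Fin n → ℝ) ≃ₗ[ℝ] (Idx n → Idx n → Fin n → ℝ) :=
  LinearEquiv.ofLinear (conjBL M) (conjBL Nv)
    (LinearMap.ext fun B => conjBfun_conjBfun h' B)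
    (LinearMap.ext fun B => conjBfun_conjBfun h B)

end Conj

-- ===== chunk 2 =====
section Transfer
variable {n : ℕ}

lemma mem_g1_iff (y : Vn n) (A : Idx n → Fin n → ℝ) :
    A ∈ g1 y ↔ (∀ j, (∑ i, y i * A (Sum.inr i) j) = 0) ∧
      (∀ i j, A (Sum.inr i) j = A (Sum.inr j) i) ∧
      (∀ i j, A (Sum.inl i) j = A (Sum.inl j) i) := Iff.rfl

lemma mem_g2_iff (y : Vn n) (B : Idx n → Idx n → Fin n → ℝ) :
    B ∈ g2 y ↔ (∀ a b, B a b = B b a) ∧ ∀ a, B a ∈ g1 y := Iff.rfl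

lemma mem_evKer_iff (e : W n) (A : Idx n → Fin n → ℝ) :
    A ∈ evKer e ↔ ∀ j,
      (∑ i, e.1 i * A (Sum.inl i) j) + (∑ i, e.2 i * A (Sum.inr i) j) = 0 := Iff.rfl

lemma mul_sum_comm' (f : Fin n → ℝ) (g : Fin n → Fin n → ℝ) (k : Fin n → ℝ) :
    ∑ i, f i * ∑ p, g i p * k p = ∑ p, (∑ i, f i * g i p) * k p := by
  simp_rw [Finset.mul_sum, Finset.sum_mul]
  rw [Finset.sum_comm]
  exact Finset.sum_congr rfl fun p _ => Finset.sum_congr rfl fun i _ => by ring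

lemma sum_coeff_swap (c : Fin n → ℝ) (M : Fin n → Fin n → ℝ) (X : Fin n → ℝ) :
    ∑ i, (∑ a, c a * M a i) * X i = ∑ a, c a * ∑ i, M a i * X i := by
  simp_rw [Finset.sum_mul, Finset.mul_sum]
  rw [Finset.sum_comm]
  exact Finset.sum_congr rfl fun p _ => Finset.sum_congr rfl fun i _ => by ring

lemma sum_single_mul (x : Fin n) (f : Fin n → ℝ) :
    ∑ i, (Pi.single x 1 : Vn n) i * f i = f x := by
  simp [Pi.single_apply, ite_mul]

lemma dsum_as_opL (M Z : Fin n → Fin n → ℝ) (a b : Fin n) :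
    dsum M Z a b = opL M (fun j => ∑ i, M a i * Z i j) b :=
  mul_sum_comm _ _ _

lemma dsum_symm (P : Fin n → Fin n → ℝ) {Z : Fin n → Fin n → ℝ}
    (hZ : ∀ i j, Z i j = Z j i) (a b : Fin n) : dsum P Z a b = dsum P Z b a := by
  unfold dsum opL
  simp_rw [Finset.mul_sum]
  rw [Finset.sum_comm]
  exact Finset.sum_congr rfl fun i _ => Finset.sum_congr rfl fun j _ => by rw [hZ]; ring

lemma sum_mul_dsum_collapse {M Nv : Fin n → Fin n → ℝ} (h2 : isInv Nv M)
    (Z : Fin n → Fin n → ℝ) (a : Fin n) (j : Fin n) :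
    ∑ i, M a i * dsum Nv Z i j = opL Nv (fun b => Z a b) j := by
  unfold dsum
  rw [mul_sum_comm' (fun i => M a i) (fun i p => Nv i p) (fun p => opL Nv (Z p) j)]
  simp [h2 a, ite_mul, Finset.sum_ite_eq, opL]

variable {M Nv : Fin n → Fin n → ℝ}

lemma conjA_inl (A : Idx n → Fin n → ℝ) (a b : Fin n) :
    conjAfun M A (.inl a) b = dsum M (fun i j => A (.inl i) j) a b := rfl

lemma conjA_inr (A : Idx n → Fin n → ℝ) (a b : Fin n) :
    conjAfun M A (.inr a) b = dsum M (fun i j => A (.inr i) j) a b := rfl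

lemma conjA_mem_g1 {y : Vn n} {lastIdx : Fin n} (hy : ∀ i, M lastIdx i = y i)
    {A : Idx n → Fin n → ℝ} (hA : A ∈ g1 y) :
    conjAfun M A ∈ g1 (Pi.single lastIdx (1:ℝ)) := by
  obtain ⟨h1, h2, h3⟩ := hA
  refine ⟨fun j => ?_, fun i j => ?_, fun i j => ?_⟩
  · rw [sum_single_mul lastIdx (fun i => conjAfun M A (Sum.inr i) j)]
    rw [conjA_inr, dsum_as_opL]
    have : (fun j' => ∑ i, M lastIdx i * A (.inr i) j') = (fun _ => (0:ℝ)) := by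
      funext j'
      simp_rw [hy]
      exact h1 j'
    rw [this]
    simp [opL]
  · exact dsum_symm M h2 i j
  · exact dsum_symm M h3 i j

lemma conjA_mem_g1_back {y : Vn n} {lastIdx : Fin n} (hy : ∀ i, M lastIdx i = y i)
    (h2 : isInv Nv M) {C : Idx n → Fin n → ℝ} (hC : C ∈ g1 (Pi.single lastIdx (1:ℝ))) :
    conjAfun Nv C ∈ g1 y := by
  obtain ⟨c1, c2, c3⟩ := hC
  have hClast : ∀ b, C (.inr lastIdx) b = 0 := by
    intro b
    have := c1 b
    rwa [sum_single_mul] at this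
  refine ⟨fun j => ?_, fun i j => ?_, fun i j => ?_⟩
  · simp_rw [← hy, conjA_inr]
    rw [sum_mul_dsum_collapse h2]
    simp [opL, hClast]
  · exact dsum_symm Nv c2 i j
  · exact dsum_symm Nv c3 i j

lemma opL_add_fun (P : Fin n → Fin n → ℝ) (F G : Fin n → ℝ) (b : Fin n) :
    opL P F b + opL P G b = opL P (fun j => F j + G j) b := by
  unfold opL
  rw [← Finset.sum_add_distrib]
  exact Finset.sum_congr rfl fun j _ => by ring

lemma evstep (T : Fin n → Fin n → ℝ) (e : Fin n → ℝ) (b : Fin n) :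
    ∑ a, e a * dsum M T a b = opL M (fun j => ∑ i, (∑ a, e a * M a i) * T i j) b := by
  simp_rw [dsum_as_opL]
  rw [← opL_sum M e (fun a => fun j => ∑ i, M a i * T i j) b]
  congr 1
  funext j
  rw [sum_coeff_swap]

lemma conjA_mem_evKer (c d : Vn n) {A : Idx n → Fin n → ℝ}
    (hA : A ∈ evKer ((fun i => ∑ a, c a * M a i), (fun i => ∑ a, d a * M a i))) :
    conjAfun M A ∈ evKer (c, d) := by
  intro b
  show (∑ a, c a * conjAfun M A (.inl a) b) + (∑ a, d a * conjAfun M A (.inr a) b) = 0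
  simp_rw [conjA_inl, conjA_inr]
  rw [evstep, evstep, opL_add_fun]
  have : (fun j => (∑ i, (∑ a, c a * M a i) * A (.inl i) j)
      + (∑ i, (∑ a, d a * M a i) * A (.inr i) j)) = fun _ => (0:ℝ) := by
    funext j
    exact hA j
  rw [this]
  simp [opL]

lemma evstep' (h2 : isInv Nv M) (Z : Fin n → Fin n → ℝ) (e : Fin n → ℝ) (j : Fin n) :
    ∑ i, (∑ a, e a * M a i) * dsum Nv Z i j = opL Nv (fun b => ∑ a, e a * Z a b) j := by
  rw [sum_coeff_swap e M (fun i => dsum Nv Z i j)]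
  simp_rw [sum_mul_dsum_collapse h2]
  rw [← opL_sum Nv e (fun a b => Z a b) j]

lemma conjA_mem_evKer_back (h2 : isInv Nv M) (c d : Vn n) {C : Idx n → Fin n → ℝ}
    (hC : C ∈ evKer (c, d)) :
    conjAfun Nv C ∈ evKer ((fun i => ∑ a, c a * M a i), (fun i => ∑ a, d a * M a i)) := by
  intro j
  show (∑ i, (∑ a, c a * M a i) * conjAfun Nv C (.inl i) j)
      + (∑ i, (∑ a, d a * M a i) * conjAfun Nv C (.inr i) j) = 0
  simp_rw [conjA_inl, conjA_inr]
  rw [evstep' h2, evstep' h2, opL_add_fun]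
  have : (fun b => (∑ a, c a * C (.inl a) b) + (∑ a, d a * C (.inr a) b))
      = fun _ => (0:ℝ) := by
    funext b
    exact hC b
  rw [this]
  simp [opL]

end Transfer

-- ===== chunk 3 =====
noncomputable section Basis
variable {n : ℕ}

def eps0 (n : ℕ) : Fin n → Vn n := fun i => Pi.single i 1

def Mb (ε : Module.Basis (Fin n) ℝ (Vn n)) : Fin n → Fin n → ℝ := fun a i => ε a i
def Nb (ε : Module.Basis (Fin n) ℝ (Vn n)) : Fin n → Fin n → ℝ := fun j a => ε.repr (Pi.single j 1) a

lemma isInv_Mb_Nb (ε : Module.Basis (Fin n) ℝ (Vn n)) : isInv (Mb ε) (Nb ε) := by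
  intro i j
  have h := ε.sum_repr (Pi.single i 1)
  have h' := congrFun h j
  rw [Finset.sum_apply] at h'
  simp only [Pi.smul_apply, smul_eq_mul] at h'
  rw [show (∑ a, Nb ε i a * Mb ε a j) = ∑ a, (ε.repr (Pi.single i 1)) a * ε a j from rfl, h',
    Pi.single_apply]
  simp [eq_comm]

lemma isInv_Nb_Mb (ε : Module.Basis (Fin n) ℝ (Vn n)) : isInv (Nb ε) (Mb ε) := by
  intro i j
  have key : ∑ a, (ε i a) • (Pi.single a 1 : Vn n) = ε i := by
    funext k
    rw [Finset.sum_apply]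
    simp [Pi.single_apply]
  calc ∑ a, Mb ε i a * Nb ε a j = (ε.repr (∑ a, (ε i a) • (Pi.single a 1 : Vn n))) j := by
        rw [map_sum]
        rw [Finset.sum_apply']
        simp only [map_smul, Finsupp.smul_apply, smul_eq_mul]
        rfl
    _ = if i = j then 1 else 0 := by
        rw [key, ε.repr_self]
        simp [Finsupp.single_apply]

lemma tsum3_swap12 (P : Fin n → Fin n → ℝ) {X X' : Fin n → Fin n → Fin n → ℝ}
    (hX : ∀ i i' j, X i i' j = X' i' i j) (a b c : Fin n) :
    tsum3 P X a b c = tsum3 P X' b a c := by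
  unfold tsum3 dsum
  simp_rw [Finset.mul_sum]
  rw [Finset.sum_comm]
  refine Finset.sum_congr rfl fun i' _ => Finset.sum_congr rfl fun i _ => ?_
  have hfe : X i i' = X' i' i := funext (hX i i')
  rw [hfe]; ring

lemma conjB_apply (M : Fin n → Fin n → ℝ) (B : Idx n → Idx n → Fin n → ℝ)
    (w w2 : Idx n) (c : Fin n) :
    conjBfun M B w w2 c = ∑ i, M (pos w) i * conjAfun M (B (retag w i)) w2 c := rfl

lemma conjB_row (M : Fin n → Fin n → ℝ) (B : Idx n → Idx n → Fin n → ℝ) (w : Idx n) :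
    conjBfun M B w = ∑ i, M (pos w) i • conjAfun M (B (retag w i)) := by
  funext w2 c
  rw [conjB_apply]
  rw [Finset.sum_apply, Finset.sum_apply]
  simp

lemma conjB_mem_g2 {M : Fin n → Fin n → ℝ} {y : Vn n} {lastIdx : Fin n}
    (hy : ∀ i, M lastIdx i = y i) {B : Idx n → Idx n → Fin n → ℝ} (hB : B ∈ g2 y) :
    conjBfun M B ∈ g2 (Pi.single lastIdx (1:ℝ)) := by
  obtain ⟨hsym, hrow⟩ := hB
  constructor
  · intro w1 w2
    funext c
    exact tsum3_swap12 M (fun i i' j => congrFun (hsym (retag w1 i) (retag w2 i')) j) _ _ _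
  · intro w
    rw [conjB_row]
    exact Submodule.sum_smul_mem _ _ fun i _ => conjA_mem_g1 hy (hrow (retag w i))

lemma elist_coeff (ε : Module.Basis (Fin n) ℝ (Vn n)) (k : Fin (2 * n)) :
    elist (⇑ε) k = ((fun i => ∑ a, (elist (eps0 n) k).1 a * Mb ε a i),
      (fun i => ∑ a, (elist (eps0 n) k).2 a * Mb ε a i)) := by
  have hx : ∀ (x i : Fin n), (∑ a, (eps0 n x) a * Mb ε a i) = ε x i :=
    fun x i => sum_single_mul x (fun a => Mb ε a i)
  have h0' : ∀ i : Fin n, (∑ a, (0 : Vn n) a * Mb ε a i) = (0 : Vn n) i := by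
    intro i; simp
  unfold elist
  by_cases hk : (k : ℕ) < n
  · rw [dif_pos hk, dif_pos hk]
    by_cases h0 : 0 < (k : ℕ)
    · rw [dif_pos h0, dif_pos h0]
      exact Prod.ext (funext fun i => (hx _ i).symm) (funext fun i => (hx _ i).symm)
    · rw [dif_neg h0, dif_neg h0]
      exact Prod.ext (funext fun i => (hx _ i).symm) (funext fun i => (h0' i).symm)
  · rw [dif_neg hk, dif_neg hk]
    exact Prod.ext (funext fun i => (h0' i).symm) (funext fun i => (hx _ i).symm)

def conjEb (ε : Module.Basis (Fin n) ℝ (Vn n)) : (Idx n → Fin n → ℝ) ≃ₗ[ℝ] (Idx n → Fin n → ℝ) :=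
  conjE (isInv_Mb_Nb ε) (isInv_Nb_Mb ε)

def conjBEb (ε : Module.Basis (Fin n) ℝ (Vn n)) :
    (Idx n → Idx n → Fin n → ℝ) ≃ₗ[ℝ] (Idx n → Idx n → Fin n → ℝ) :=
  conjBE (isInv_Mb_Nb ε) (isInv_Nb_Mb ε)

lemma mem_g1pref_iff {y : Vn n} {ε : Fin n → Vn n} {m : ℕ} {A : Idx n → Fin n → ℝ} :
    A ∈ g1pref y ε m ↔ A ∈ g1 y ∧ ∀ k : Fin (2 * n), (k : ℕ) < m → A ∈ evKer (elist ε k) := by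
  unfold g1pref
  rw [Submodule.mem_inf]
  simp [Submodule.mem_iInf]

lemma map_g1pref (ε : Module.Basis (Fin n) ℝ (Vn n)) {y : Vn n} {lastIdx : Fin n}
    (hy : ∀ i, Mb ε lastIdx i = y i) (m : ℕ) :
    Submodule.map (conjEb ε : (Idx n → Fin n → ℝ) →ₗ[ℝ] (Idx n → Fin n → ℝ))
      (g1pref y (⇑ε) m) = g1pref (Pi.single lastIdx (1:ℝ)) (eps0 n) m := by
  have h1 : isInv (Mb ε) (Nb ε) := isInv_Mb_Nb ε
  have h2 : isInv (Nb ε) (Mb ε) := isInv_Nb_Mb ε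
  ext x
  rw [Submodule.mem_map]
  constructor
  · rintro ⟨A, hA, rfl⟩
    rw [mem_g1pref_iff] at hA ⊢
    obtain ⟨hAg1, hAev⟩ := hA
    constructor
    · exact conjA_mem_g1 hy hAg1
    · intro k hk
      have := conjA_mem_evKer (M := Mb ε) ((elist (eps0 n) k).1) ((elist (eps0 n) k).2)
        (by rw [← elist_coeff ε k]; exact hAev k hk)
      simp at this
      exact this
  · intro hx
    refine ⟨conjAfun (Nb ε) x, ?_, conjAfun_conjAfun h2 x⟩
    rw [mem_g1pref_iff] at hx ⊢
    obtain ⟨hxg1, hxev⟩ := hx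
    constructor
    · exact conjA_mem_g1_back hy h2 hxg1
    · intro k hk
      have := conjA_mem_evKer_back (M := Mb ε) h2 ((elist (eps0 n) k).1)
        ((elist (eps0 n) k).2) (by simpa using hxev k hk)
      rw [elist_coeff ε k]
      exact this

lemma conjB_mem_g2_back {Nv : Fin n → Fin n → ℝ} {M : Fin n → Fin n → ℝ} {y : Vn n}
    {lastIdx : Fin n} (hy : ∀ i, M lastIdx i = y i) (h2 : isInv Nv M)
    {C : Idx n → Idx n → Fin n → ℝ} (hC : C ∈ g2 (Pi.single lastIdx (1:ℝ))) :
    conjBfun Nv C ∈ g2 y := by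
  obtain ⟨hsym, hrow⟩ := hC
  constructor
  · intro w1 w2
    funext c
    exact tsum3_swap12 Nv (fun i i' j => congrFun (hsym (retag w1 i) (retag w2 i')) j) _ _ _
  · intro w
    rw [conjB_row]
    exact Submodule.sum_smul_mem _ _ fun i _ => conjA_mem_g1_back hy h2 (hrow (retag w i))

lemma map_g2 (ε : Module.Basis (Fin n) ℝ (Vn n)) {y : Vn n} {lastIdx : Fin n}
    (hy : ∀ i, Mb ε lastIdx i = y i) :
    Submodule.map (conjBEb ε : _ →ₗ[ℝ] _) (g2 y) = g2 (Pi.single lastIdx (1:ℝ)) := by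
  have h2 : isInv (Nb ε) (Mb ε) := isInv_Nb_Mb ε
  ext x
  rw [Submodule.mem_map]
  constructor
  · rintro ⟨B, hB, rfl⟩
    exact conjB_mem_g2 hy hB
  · intro hx
    exact ⟨conjBfun (Nb ε) x, conjB_mem_g2_back hy h2 hx, conjBfun_conjBfun h2 x⟩

end Basis

-- ===== chunk 4 : standardized g1pref =====
noncomputable section StdG1
variable {N : ℕ}

lemma sum_eps0_mul {n : ℕ} (x : Fin n) (f : Fin n → ℝ) :
    ∑ i, eps0 n x i * f i = f x := sum_single_mul x f

/-- Membership in the standardized `g1pref` (for `m ≤ N+1`), in concrete terms. -/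
lemma mem_g1pref_std_iff {m : ℕ} (hm : m ≤ N + 1) (A : Idx (N+1) → Fin (N+1) → ℝ) :
    A ∈ g1pref (Pi.single (Fin.last N) (1:ℝ)) (eps0 (N+1)) m ↔
      (∀ j, A (.inr (Fin.last N)) j = 0) ∧
      (∀ i j, A (.inr i) j = A (.inr j) i) ∧
      (∀ i j, A (.inl i) j = A (.inl j) i) ∧
      (∀ k : ℕ, (hk : k < m) → ∀ j, A (.inl ⟨k, by omega⟩) j
         + (if h : 0 < k then A (.inr ⟨k - 1, by omega⟩) j else 0) = 0) := by
  rw [mem_g1pref_iff, mem_g1_iff]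
  constructor
  · rintro ⟨⟨c1, c2, c3⟩, hev⟩
    refine ⟨fun j => ?_, c2, c3, fun k hk j => ?_⟩
    · have := c1 j
      rwa [sum_single_mul (Fin.last N) (fun i => A (Sum.inr i) j)] at this
    · have hk2 : k < 2 * (N + 1) := by omega
      have hkn : ((⟨k, hk2⟩ : Fin (2 * (N+1))) : ℕ) < N + 1 := by
        show k < N + 1; omega
      have hev' := hev ⟨k, hk2⟩ (by show k < m; omega) j
      unfold elist at hev'
      rw [dif_pos hkn] at hev'
      by_cases h0 : 0 < k
      · rw [dif_pos (show 0 < ((⟨k, hk2⟩ : Fin (2 * (N+1))) : ℕ) from h0)] at hev'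
        dsimp only at hev'
        rw [sum_eps0_mul, sum_eps0_mul] at hev'
        rw [dif_pos h0]
        exact hev'
      · rw [dif_neg (show ¬ 0 < ((⟨k, hk2⟩ : Fin (2 * (N+1))) : ℕ) from h0)] at hev'
        dsimp only at hev'
        rw [sum_eps0_mul] at hev'
        simp only [Pi.zero_apply, zero_mul, Finset.sum_const_zero, add_zero] at hev'
        rw [dif_neg h0, add_zero]
        exact hev'
  · rintro ⟨c1, c2, c3, c4⟩
    refine ⟨⟨fun j => ?_, c2, c3⟩, fun k hk => ?_⟩
    · rw [sum_single_mul (Fin.last N) (fun i => A (Sum.inr i) j)]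
      exact c1 j
    · intro j
      have hkn : (k : ℕ) < N + 1 := by omega
      unfold elist
      rw [dif_pos hkn]
      by_cases h0 : 0 < (k : ℕ)
      · rw [dif_pos h0]
        dsimp only
        rw [sum_eps0_mul, sum_eps0_mul]
        have := c4 (k : ℕ) hk j
        rw [dif_pos h0] at this
        exact this
      · rw [dif_neg h0]
        dsimp only
        rw [sum_eps0_mul]
        simp only [Pi.zero_apply, zero_mul, Finset.sum_const_zero, add_zero]
        have := c4 (k : ℕ) hk j
        rw [dif_neg h0, add_zero] at this
        exact this

def sigS (N m : ℕ) := Σ s : Fin (N + 1 - m), Fin (N + 1 - m - (s : ℕ))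
def sigT (N m : ℕ) := Σ t : Fin (N + 1 - max m 1), Fin (max m 1 + (t : ℕ))
def sigG (N m : ℕ) := sigS N m ⊕ sigT N m

instance {m : ℕ} : Fintype (sigG N m) := by unfold sigG sigS sigT; infer_instance

def mkS (N m : ℕ) (p c : ℕ) (hs : p < N + 1 - m) (hc : c < N + 1 - m - p) : sigG N m :=
  .inl ⟨⟨p, hs⟩, ⟨c, hc⟩⟩

def mkT (N m : ℕ) (t a : ℕ) (ht : t < N + 1 - max m 1) (ha : a < max m 1 + t) : sigG N m :=
  .inr ⟨⟨t, ht⟩, ⟨a, ha⟩⟩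

lemma mkS_congr {m : ℕ} (f : sigG N m → ℝ) {p c p' c' : ℕ} {h1 h2 h1' h2'}
    (hp : p = p') (hc : c = c') :
    f (mkS N m p c h1 h2) = f (mkS N m p' c' h1' h2') := by
  subst hp; subst hc; rfl

lemma mkT_congr {m : ℕ} (f : sigG N m → ℝ) {t a t' a' : ℕ} {h1 h2 h1' h2'}
    (ht : t = t') (ha : a = a') :
    f (mkT N m t a h1 h2) = f (mkT N m t' a' h1' h2') := by
  subst ht; subst ha; rfl

def tf0 (N m : ℕ) (f : sigG N m → ℝ) (p q : ℕ) : ℝ :=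
  if h1 : q + 2 ≤ N + 1 ∧ max m 1 ≤ q + 1 ∧ p ≤ q then
    f (mkT N m (q + 1 - max m 1) p (by omega) (by omega))
  else if h2 : q + 2 ≤ N + 1 ∧ q + 1 < max m 1 ∧ max m 1 ≤ p + q + 1 ∧ p ≤ q
      ∧ max m 1 < N + 1 then
    f (mkT N m 0 (p + q + 1 - max m 1) (by omega) (by omega))
  else 0

def tf (N m : ℕ) (f : sigG N m → ℝ) (p q : ℕ) : ℝ := tf0 N m f (min p q) (max p q)

def sf0 (N m : ℕ) (f : sigG N m → ℝ) (p q : ℕ) : ℝ :=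
  if h : m ≤ p ∧ p ≤ q ∧ q ≤ N then
    f (mkS N m (p - m) (q - p) (by omega) (by omega))
  else if 1 ≤ p then - tf N m f (p - 1) q
  else 0

def sf (N m : ℕ) (f : sigG N m → ℝ) (p q : ℕ) : ℝ := sf0 N m f (min p q) (max p q)

def recon (N m : ℕ) (f : sigG N m → ℝ) : Idx (N+1) → Fin (N+1) → ℝ :=
  fun w b => match w with
  | .inl a => sf N m f (a : ℕ) (b : ℕ)
  | .inr a => tf N m f (a : ℕ) (b : ℕ)

lemma tf_comm (N m : ℕ) (f : sigG N m → ℝ) (p q : ℕ) : tf N m f p q = tf N m f q p := by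
  unfold tf
  rw [Nat.min_comm, Nat.max_comm]

lemma sf_comm (N m : ℕ) (f : sigG N m → ℝ) (p q : ℕ) : sf N m f p q = sf N m f q p := by
  unfold sf
  rw [Nat.min_comm, Nat.max_comm]

lemma tf0_top (N m : ℕ) (f : sigG N m → ℝ) (p : ℕ) : tf0 N m f p N = 0 := by
  unfold tf0
  rw [dif_neg (by omega), dif_neg (by omega)]

lemma tf_cross {m : ℕ} (f : sigG N m → ℝ) {q k : ℕ} (hm : m ≤ N + 1) (hk : k < m)
    (hq : 1 ≤ q) (hqk : q < k) : tf N m f (q - 1) k = tf N m f (k - 1) q := by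
  have hm1 : max m 1 = m := by omega
  unfold tf
  rw [Nat.min_eq_left (by omega), Nat.max_eq_right (by omega),
    Nat.min_eq_right (by omega), Nat.max_eq_left (by omega)]
  by_cases hN : k + 2 ≤ N + 1
  · by_cases hkm : m ≤ k + 1
    · -- k = m - 1
      unfold tf0
      rw [dif_pos (by omega), dif_neg (by omega), dif_pos (by omega)]
      exact mkT_congr f (by omega) (by omega)
    · -- k + 1 < m
      by_cases hc : m ≤ q + k ∧ m < N + 1
      · unfold tf0
        rw [dif_neg (by omega), dif_pos (by omega), dif_neg (by omega),
          dif_pos (by omega)]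
        exact mkT_congr f (by omega) (by omega)
      · unfold tf0
        rw [dif_neg (by omega), dif_neg (by omega), dif_neg (by omega),
          dif_neg (by omega)]
  · -- k = N, m = N + 1
    have hkN : k = N := by omega
    subst hkN
    rw [tf0_top]
    unfold tf0
    rw [dif_neg (by omega), dif_neg (by omega)]

lemma recon_mem {m : ℕ} (hm : m ≤ N + 1) (f : sigG N m → ℝ) :
    recon N m f ∈ g1pref (Pi.single (Fin.last N) (1:ℝ)) (eps0 (N+1)) m := by
  rw [mem_g1pref_std_iff hm]
  refine ⟨fun j => ?_, fun i j => ?_, fun i j => ?_, fun k hk j => ?_⟩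
  · show tf N m f N (j : ℕ) = 0
    have hj : (j : ℕ) ≤ N := by omega
    unfold tf
    rw [Nat.max_eq_left (by omega), tf0_top]
  · exact tf_comm N m f _ _
  · exact sf_comm N m f _ _
  · have hq : (j : ℕ) ≤ N := by omega
    have hm1 : max m 1 = m := by omega
    by_cases h0 : 0 < k
    · rw [dif_pos h0]
      show sf N m f k (j : ℕ) + tf N m f (k - 1) (j : ℕ) = 0
      rcases Nat.lt_or_ge (j : ℕ) k with hjk | hjk
      · -- j < k
        by_cases hq1 : 1 ≤ (j : ℕ)
        · have : sf N m f k (j : ℕ) = - tf N m f ((j : ℕ) - 1) k := by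
            unfold sf
            rw [Nat.min_eq_right (by omega), Nat.max_eq_left (by omega)]
            unfold sf0
            rw [dif_neg (by omega), if_pos hq1]
          rw [this, tf_cross f hm hk hq1 hjk]
          ring
        · -- j = 0
          have hj0 : (j : ℕ) = 0 := by omega
          have h1 : sf N m f k (j : ℕ) = 0 := by
            unfold sf
            rw [hj0, Nat.min_eq_right (by omega), Nat.max_eq_left (by omega)]
            unfold sf0
            rw [dif_neg (by omega), if_neg (by omega)]
          have h2 : tf N m f (k - 1) (j : ℕ) = 0 := by
            unfold tf
            rw [hj0, Nat.min_eq_right (by omega), Nat.max_eq_left (by omega)]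
            unfold tf0
            rw [dif_neg (by omega), dif_neg (by omega)]
          rw [h1, h2, add_zero]
      · -- k ≤ j
        have : sf N m f k (j : ℕ) = - tf N m f (k - 1) (j : ℕ) := by
          unfold sf
          rw [Nat.min_eq_left (by omega), Nat.max_eq_right (by omega)]
          unfold sf0
          rw [dif_neg (by omega), if_pos (by omega)]
        rw [this]
        ring
    · rw [dif_neg h0, add_zero]
      have hk0 : k = 0 := by omega
      show sf N m f k (j : ℕ) = 0
      unfold sf
      rw [hk0, Nat.min_eq_left (by omega), Nat.max_eq_right (by omega)]
      unfold sf0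
      rw [dif_neg (by omega), if_neg (by omega)]

end StdG1
-- ===== chunk 5 : the equivalence and dimension count =====
noncomputable section StdG1b
variable {N : ℕ}

def resF (N m : ℕ) (A : Idx (N+1) → Fin (N+1) → ℝ) (x : sigG N m) : ℝ :=
  match x with
  | .inl ⟨s, c⟩ => A (.inl ⟨m + (s : ℕ), by have := s.isLt; omega⟩)
      ⟨m + (s : ℕ) + (c : ℕ), by have := s.isLt; have := c.isLt; omega⟩
  | .inr ⟨t, a⟩ => A (.inr ⟨(a : ℕ), by have := a.isLt; have := t.isLt; omega⟩)
      ⟨max m 1 - 1 + (t : ℕ), by have := t.isLt; omega⟩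

lemma resF_mkS {m : ℕ} (A : Idx (N+1) → Fin (N+1) → ℝ) (p c : ℕ) (hp : p < N + 1 - m)
    (hc : c < N + 1 - m - p) :
    resF N m A (mkS N m p c hp hc)
      = A (.inl ⟨m + p, by omega⟩) ⟨m + p + c, by omega⟩ := rfl

lemma resF_mkT {m : ℕ} (A : Idx (N+1) → Fin (N+1) → ℝ) (t a : ℕ) (ht : t < N + 1 - max m 1)
    (ha : a < max m 1 + t) :
    resF N m A (mkT N m t a ht ha)
      = A (.inr ⟨a, by omega⟩) ⟨max m 1 - 1 + t, by omega⟩ := rfl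

lemma A_inr_congr (A : Idx (N+1) → Fin (N+1) → ℝ) {p q p' q' : ℕ}
    {hp : p < N + 1} {hq : q < N + 1} {hp' : p' < N + 1} {hq' : q' < N + 1}
    (e1 : p = p') (e2 : q = q') :
    A (.inr ⟨p, hp⟩) ⟨q, hq⟩ = A (.inr ⟨p', hp'⟩) ⟨q', hq'⟩ := by
  subst e1; subst e2; rfl

lemma A_inl_congr (A : Idx (N+1) → Fin (N+1) → ℝ) {p q p' q' : ℕ}
    {hp : p < N + 1} {hq : q < N + 1} {hp' : p' < N + 1} {hq' : q' < N + 1}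
    (e1 : p = p') (e2 : q = q') :
    A (.inl ⟨p, hp⟩) ⟨q, hq⟩ = A (.inl ⟨p', hp'⟩) ⟨q', hq'⟩ := by
  subst e1; subst e2; rfl

lemma recon_resF {m : ℕ} (hm : m ≤ N + 1) {A : Idx (N+1) → Fin (N+1) → ℝ}
    (hA : A ∈ g1pref (Pi.single (Fin.last N) (1:ℝ)) (eps0 (N+1)) m) :
    recon N m (resF N m A) = A := by
  rw [mem_g1pref_std_iff hm] at hA
  obtain ⟨c1, c2, c3, c4⟩ := hA
  -- last-row vanishing, in mk form
  have d2 : ∀ (q : ℕ) (hq : q < N + 1), A (.inr ⟨N, by omega⟩) ⟨q, hq⟩ = 0 := by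
    intro q hq
    exact c1 ⟨q, hq⟩
  -- cross identity
  have fCI : ∀ k j : ℕ, 1 ≤ k → (hk : k < m) → 1 ≤ j → (hj : j < m) →
      A (.inr ⟨k - 1, by omega⟩) ⟨j, by omega⟩ = A (.inr ⟨j - 1, by omega⟩) ⟨k, by omega⟩ := by
    intro k j hk1 hk2 hj1 hj2
    have e1 := c4 k hk2 ⟨j, by omega⟩
    rw [dif_pos (by omega : 0 < k)] at e1
    have e2 := c4 j hj2 ⟨k, by omega⟩
    rw [dif_pos (by omega : 0 < j)] at e2
    have e3 : A (.inl ⟨k, by omega⟩) ⟨j, by omega⟩ = A (.inl ⟨j, by omega⟩) ⟨k, by omega⟩ :=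
      c3 _ _
    linarith
  -- zero column
  have fZ0 : ∀ c : ℕ, (h : c + 1 < m) → A (.inr ⟨c, by omega⟩) ⟨0, by omega⟩ = 0 := by
    intro c h
    have e1 := c4 (c + 1) h ⟨0, by omega⟩
    rw [dif_pos (by omega : 0 < c + 1)] at e1
    have e2 := c4 0 (by omega) ⟨c + 1, by omega⟩
    rw [dif_neg (by omega : ¬ 0 < 0)] at e2
    rw [add_zero] at e2
    have e3 : A (.inl ⟨c + 1, by omega⟩) ⟨0, by omega⟩
        = A (.inl ⟨0, by omega⟩) ⟨c + 1, by omega⟩ := c3 _ _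
    have key : A (.inr ⟨c, by omega⟩) ⟨0, by omega⟩
        = A (.inr ⟨c + 1 - 1, by omega⟩) ⟨0, by omega⟩ := A_inr_congr A (by omega) rfl
    rw [key]
    linarith
  -- antidiagonal propagation
  have fAD : ∀ p : ℕ, ∀ q : ℕ, (hp : p < m) → (hq : q < m) → m ≤ p + q + 1 →
      A (.inr ⟨p, by omega⟩) ⟨q, by omega⟩
        = A (.inr ⟨p + q + 1 - m, by omega⟩) ⟨m - 1, by omega⟩ := by
    intro p
    induction p using Nat.strong_induction_on with
    | _ p ih =>
      intro q hp hq hs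
      by_cases hqm : q = m - 1
      · exact A_inr_congr A (by omega) (by omega)
      · have hp1 : 1 ≤ p := by omega
        have hq1 : q + 1 < m := by omega
        have step : A (.inr ⟨p - 1, by omega⟩) ⟨q + 1, by omega⟩
            = A (.inr ⟨q, by omega⟩) ⟨p, by omega⟩ := fCI p (q+1) hp1 hp (by omega) hq1
        have sym : A (.inr ⟨q, by omega⟩) ⟨p, by omega⟩
            = A (.inr ⟨p, by omega⟩) ⟨q, by omega⟩ := c2 _ _
        have hrec := ih (p - 1) (by omega) (q + 1) (by omega) hq1 (by omega)
        rw [step, sym] at hrec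
        rw [hrec]
        exact A_inr_congr A (by omega) rfl
  -- low antidiagonals vanish
  have fZD : ∀ p : ℕ, ∀ q : ℕ, (hp : p < m) → (hq : q < m) → p + q + 1 < m →
      A (.inr ⟨p, by omega⟩) ⟨q, by omega⟩ = 0 := by
    intro p
    induction p using Nat.strong_induction_on with
    | _ p ih =>
      intro q hp hq hs
      by_cases hp0 : p = 0
      · subst hp0
        have sym : A (.inr ⟨0, by omega⟩) ⟨q, by omega⟩
            = A (.inr ⟨q, by omega⟩) ⟨0, by omega⟩ := c2 _ _
        rw [sym]
        exact fZ0 q (by omega)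
      · have hp1 : 1 ≤ p := by omega
        have hq1 : q + 1 < m := by omega
        have step : A (.inr ⟨p - 1, by omega⟩) ⟨q + 1, by omega⟩
            = A (.inr ⟨q, by omega⟩) ⟨p, by omega⟩ := fCI p (q+1) hp1 hp (by omega) hq1
        have sym : A (.inr ⟨q, by omega⟩) ⟨p, by omega⟩
            = A (.inr ⟨p, by omega⟩) ⟨q, by omega⟩ := c2 _ _
        have hrec := ih (p - 1) (by omega) (q + 1) (by omega) hq1 (by omega)
        rw [step, sym] at hrec
        exact hrec
  -- tf reconstructs the inr part, sorted case
  have factT0 : ∀ p q : ℕ, (hpq : p ≤ q) → (hq : q ≤ N) →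
      tf0 N m (resF N m A) p q = A (.inr ⟨p, by omega⟩) ⟨q, by omega⟩ := by
    intro p q hpq hq
    unfold tf0
    by_cases h1 : q + 2 ≤ N + 1 ∧ max m 1 ≤ q + 1 ∧ p ≤ q
    · rw [dif_pos h1, resF_mkT]
      exact A_inr_congr A rfl (by omega)
    · by_cases h2 : q + 2 ≤ N + 1 ∧ q + 1 < max m 1 ∧ max m 1 ≤ p + q + 1 ∧ p ≤ q
          ∧ max m 1 < N + 1
      · rw [dif_neg h1, dif_pos h2, resF_mkT]
        have hAD := fAD p q (by omega) (by omega) (by omega)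
        rw [hAD]
        exact A_inr_congr A (by omega) (by omega)
      · rw [dif_neg h1, dif_neg h2]
        by_cases hqN : q = N
        · rw [show A (.inr ⟨p, by omega⟩) ⟨q, by omega⟩
              = A (.inr ⟨N, by omega⟩) ⟨p, by omega⟩ from
              (c2 _ _).trans (A_inr_congr A (by omega) rfl), d2]
        · -- q < N, so ¬h1 gives q + 1 < max m 1, hence m ≥ 2
          have hq2 : q + 2 ≤ N + 1 := by omega
          have hqm : q + 1 < max m 1 := by omega
          by_cases hlow : p + q + 1 < m
          · exact (fZD p q (by omega) (by omega) hlow).symm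
          · -- m ≤ p + q + 1 and max m 1 = N + 1, i.e. m = N + 1
            have hmN : m = N + 1 := by omega
            have hAD := fAD p q (by omega) (by omega) (by omega)
            rw [hAD]
            have sym : A (.inr ⟨p + q + 1 - m, by omega⟩) ⟨m - 1, by omega⟩
                = A (.inr ⟨m - 1, by omega⟩) ⟨p + q + 1 - m, by omega⟩ := c2 _ _
            rw [sym]
            rw [show A (.inr ⟨m - 1, by omega⟩) ⟨p + q + 1 - m, by omega⟩
              = A (.inr ⟨N, by omega⟩) ⟨p + q + 1 - m, by omega⟩ from
                A_inr_congr A (by omega) rfl]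
            rw [d2]
  have factT : ∀ p q : ℕ, (hp : p ≤ N) → (hq : q ≤ N) →
      tf N m (resF N m A) p q = A (.inr ⟨p, by omega⟩) ⟨q, by omega⟩ := by
    intro p q hp hq
    unfold tf
    rcases Nat.le_total p q with h | h
    · rw [Nat.min_eq_left h, Nat.max_eq_right h]
      exact factT0 p q h hq
    · rw [Nat.min_eq_right h, Nat.max_eq_left h]
      rw [factT0 q p h hp]
      exact c2 _ _
  have factS0 : ∀ p q : ℕ, (hpq : p ≤ q) → (hq : q ≤ N) →
      sf0 N m (resF N m A) p q = A (.inl ⟨p, by omega⟩) ⟨q, by omega⟩ := by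
    intro p q hpq hq
    unfold sf0
    by_cases h1 : m ≤ p ∧ p ≤ q ∧ q ≤ N
    · rw [dif_pos h1, resF_mkS]
      exact A_inl_congr A (by omega) (by omega)
    · have hpm : p < m := by omega
      by_cases hp1 : 1 ≤ p
      · rw [dif_neg h1, if_pos hp1]
        rw [factT (p-1) q (by omega) hq]
        have e1 := c4 p hpm ⟨q, by omega⟩
        rw [dif_pos (by omega : 0 < p)] at e1
        linarith
      · rw [dif_neg h1, if_neg hp1]
        have e1 := c4 0 (by omega) ⟨q, by omega⟩
        rw [dif_neg (by omega : ¬ 0 < 0), add_zero] at e1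
        rw [show A (.inl ⟨p, by omega⟩) ⟨q, by omega⟩
          = A (.inl ⟨0, by omega⟩) ⟨q, by omega⟩ from A_inl_congr A (by omega) rfl]
        exact e1.symm
  have factS : ∀ p q : ℕ, (hp : p ≤ N) → (hq : q ≤ N) →
      sf N m (resF N m A) p q = A (.inl ⟨p, by omega⟩) ⟨q, by omega⟩ := by
    intro p q hp hq
    unfold sf
    rcases Nat.le_total p q with h | h
    · rw [Nat.min_eq_left h, Nat.max_eq_right h]
      exact factS0 p q h hq
    · rw [Nat.min_eq_right h, Nat.max_eq_left h]
      rw [factS0 q p h hp]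
      exact c3 _ _
  funext w b
  cases w with
  | inl a =>
    show sf N m (resF N m A) (a : ℕ) (b : ℕ) = A (.inl a) b
    rw [factS (a : ℕ) (b : ℕ) (by omega) (by omega)]
  | inr a =>
    show tf N m (resF N m A) (a : ℕ) (b : ℕ) = A (.inr a) b
    rw [factT (a : ℕ) (b : ℕ) (by omega) (by omega)]

lemma resF_recon {m : ℕ} (f : sigG N m → ℝ) : resF N m (recon N m f) = f := by
  funext x
  rcases x with ⟨s, c⟩ | ⟨t, a⟩
  · show sf N m f (m + (s : ℕ)) (m + (s : ℕ) + (c : ℕ)) = _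
    unfold sf
    rw [Nat.min_eq_left (by omega), Nat.max_eq_right (by omega)]
    unfold sf0
    rw [dif_pos (by refine ⟨by omega, by omega, ?_⟩; have := s.isLt; have := c.isLt; omega)]
    rw [show f (mkS N m (m + (s:ℕ) - m) (m + (s:ℕ) + (c:ℕ) - (m + (s:ℕ)))
        (by have := s.isLt; omega) (by have := s.isLt; have := c.isLt; omega))
      = f (mkS N m (s : ℕ) (c : ℕ) s.isLt c.isLt) from mkS_congr f (by omega) (by omega)]
    rfl
  · show tf N m f (a : ℕ) (max m 1 - 1 + (t : ℕ)) = _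
    have hat : (a : ℕ) ≤ max m 1 - 1 + (t : ℕ) := by have := a.isLt; omega
    unfold tf
    rw [Nat.min_eq_left hat, Nat.max_eq_right hat]
    unfold tf0
    rw [dif_pos (by have := t.isLt; have := a.isLt; omega)]
    rw [show f (mkT N m (max m 1 - 1 + (t:ℕ) + 1 - max m 1) (a : ℕ)
        (by have := t.isLt; omega) (by have := a.isLt; omega))
      = f (mkT N m (t : ℕ) (a : ℕ) t.isLt a.isLt) from mkT_congr f (by omega) rfl]
    rfl

def equivStd {m : ℕ} (hm : m ≤ N + 1) :
    (g1pref (Pi.single (Fin.last N) (1:ℝ)) (eps0 (N+1)) m) ≃ₗ[ℝ] (sigG N m → ℝ) where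
  toFun A := resF N m A.val
  map_add' A B := by funext x; rcases x with ⟨s, c⟩ | ⟨t, a⟩ <;> rfl
  map_smul' r A := by funext x; rcases x with ⟨s, c⟩ | ⟨t, a⟩ <;> rfl
  invFun f := ⟨recon N m f, recon_mem hm f⟩
  left_inv A := Subtype.ext (recon_resF hm A.property)
  right_inv f := resF_recon f

lemma gauss2 (K μ : ℕ) :
    (∑ s ∈ Finset.range K, (K - s)) + (∑ t ∈ Finset.range K, (μ + t)) = (μ + K) * K := by
  induction K with
  | zero => simp
  | succ L ih =>
    rw [Finset.sum_range_succ, Finset.sum_range_succ]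
    have e : ∑ s ∈ Finset.range L, (L + 1 - s) = (∑ s ∈ Finset.range L, (L - s)) + L := by
      rw [Finset.sum_congr rfl (fun s hs => by
        have := Finset.mem_range.1 hs
        omega : ∀ s ∈ Finset.range L, L + 1 - s = (L - s) + 1)]
      rw [Finset.sum_add_distrib, Finset.sum_const, Finset.card_range, smul_eq_mul, mul_one]
    rw [e]
    have hr : (μ + (L + 1)) * (L + 1) = (μ + L) * L + (μ + 2 * L + 1) := by ring
    omega

lemma card_sigG {m : ℕ} (hm : m ≤ N + 1) :
    Fintype.card (sigG N m) = (N + 1) * (N + 1 - m) := by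
  have hcard : Fintype.card (sigG N m)
      = (∑ s ∈ Finset.range (N + 1 - m), (N + 1 - m - s))
        + (∑ t ∈ Finset.range (N + 1 - max m 1), (max m 1 + t)) := by
    unfold sigG sigS sigT
    rw [Fintype.card_sum, Fintype.card_sigma, Fintype.card_sigma]
    simp only [Fintype.card_fin]
    rw [Fin.sum_univ_eq_sum_range (fun s => N + 1 - m - s) (N + 1 - m),
      Fin.sum_univ_eq_sum_range (fun t => max m 1 + t) (N + 1 - max m 1)]
  rcases Nat.eq_zero_or_pos m with hm0 | hm1
  · subst hm0
    rw [hcard]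
    have ea : (∑ s ∈ Finset.range (N + 1 - 0), (N + 1 - 0 - s))
        = ∑ s ∈ Finset.range (N + 1), (N + 1 - s) := rfl
    have eb : (∑ t ∈ Finset.range (N + 1 - max 0 1), (max 0 1 + t))
        = ∑ t ∈ Finset.range N, (1 + t) := rfl
    rw [ea, eb]
    have ec : (N + 1) * (N + 1 - 0) = (N + 1) * (N + 1) := rfl
    rw [ec]
    have h2 := gauss2 (N + 1) 1
    rw [show (∑ t ∈ Finset.range (N + 1), (1 + t))
      = (∑ t ∈ Finset.range N, (1 + t)) + (1 + N) from Finset.sum_range_succ _ N] at h2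
    have hr : (1 + (N + 1)) * (N + 1) = (N + 1) * (N + 1) + (N + 1) := by ring
    omega
  · have hmax : max m 1 = m := by omega
    rw [hcard, hmax]
    have h2 := gauss2 (N + 1 - m) m
    rw [h2]
    have hmK : m + (N + 1 - m) = N + 1 := by omega
    rw [hmK]

lemma finrank_g1prefStd {m : ℕ} (hm : m ≤ N + 1) :
    Module.finrank ℝ (g1pref (Pi.single (Fin.last N) (1:ℝ)) (eps0 (N+1)) m)
      = (N + 1) * (N + 1 - m) := by
  rw [LinearEquiv.finrank_eq (equivStd hm)]
  rw [Module.finrank_fintype_fun_eq_card]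
  exact card_sigG hm

end StdG1b

-- ===== chunk 6 : standardized g2 =====
noncomputable section StdG2
variable {N : ℕ}

def lo3 (x y z : ℕ) : ℕ := min x (min y z)
def hi3 (x y z : ℕ) : ℕ := max x (max y z)
def mid3 (x y z : ℕ) : ℕ := x + y + z - lo3 x y z - hi3 x y z

lemma lo3_le_mid3 (x y z : ℕ) : lo3 x y z ≤ mid3 x y z := by
  unfold mid3 lo3 hi3; simp only [Nat.min_def, Nat.max_def]; split_ifs <;> omega

lemma mid3_le_hi3 (x y z : ℕ) : mid3 x y z ≤ hi3 x y z := by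
  unfold mid3 lo3 hi3; simp only [Nat.min_def, Nat.max_def]; split_ifs <;> omega

def tri (n : ℕ) := Σ k : Fin n, Σ j : Fin ((k : ℕ) + 1), Fin ((j : ℕ) + 1)

instance {n : ℕ} : Fintype (tri n) := by unfold tri; infer_instance

def mk3 (n : ℕ) (x y z : ℕ) (h1 : x ≤ y) (h2 : y ≤ z) (h3 : z < n) : tri n :=
  ⟨⟨z, h3⟩, ⟨y, Nat.lt_succ_of_le h2⟩, ⟨x, Nat.lt_succ_of_le h1⟩⟩

lemma tri_congr {n : ℕ} (g : tri n → ℝ) {x y z x' y' z' : ℕ} {h1 h2 h3 h1' h2' h3'}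
    (ex : x = x') (ey : y = y') (ez : z = z') :
    g (mk3 n x y z h1 h2 h3) = g (mk3 n x' y' z' h1' h2' h3') := by
  subst ex; subst ey; subst ez; rfl

def symval (n : ℕ) (g : tri n → ℝ) (x y z : ℕ) : ℝ :=
  if h : hi3 x y z < n then
    g (mk3 n (lo3 x y z) (mid3 x y z) (hi3 x y z) (lo3_le_mid3 x y z) (mid3_le_hi3 x y z) h)
  else 0

lemma symval_perm {n : ℕ} (g : tri n → ℝ) {x y z x' y' z' : ℕ}
    (e1 : lo3 x y z = lo3 x' y' z') (e2 : mid3 x y z = mid3 x' y' z')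
    (e3 : hi3 x y z = hi3 x' y' z') :
    symval n g x y z = symval n g x' y' z' := by
  by_cases hh : hi3 x y z < n
  · rw [symval, symval, dif_pos hh, dif_pos (by omega : hi3 x' y' z' < n)]
    exact tri_congr g e1 e2 e3
  · rw [symval, symval, dif_neg hh, dif_neg (by omega : ¬ hi3 x' y' z' < n)]

lemma symval_swap12 {n : ℕ} (g : tri n → ℝ) (x y z : ℕ) :
    symval n g x y z = symval n g y x z :=
  symval_perm g (by unfold lo3; simp only [Nat.min_def, Nat.max_def]; split_ifs <;> omega) (by unfold mid3 lo3 hi3; simp only [Nat.min_def, Nat.max_def]; split_ifs <;> omega)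
    (by unfold hi3; simp only [Fin.val_last, Nat.min_def, Nat.max_def]; split_ifs <;> omega)

lemma symval_swap23 {n : ℕ} (g : tri n → ℝ) (x y z : ℕ) :
    symval n g x y z = symval n g x z y :=
  symval_perm g (by unfold lo3; simp only [Nat.min_def, Nat.max_def]; split_ifs <;> omega) (by unfold mid3 lo3 hi3; simp only [Nat.min_def, Nat.max_def]; split_ifs <;> omega)
    (by unfold hi3; simp only [Fin.val_last, Nat.min_def, Nat.max_def]; split_ifs <;> omega)

lemma symval_swap13 {n : ℕ} (g : tri n → ℝ) (x y z : ℕ) :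
    symval n g x y z = symval n g z y x :=
  symval_perm g (by unfold lo3; simp only [Nat.min_def, Nat.max_def]; split_ifs <;> omega) (by unfold mid3 lo3 hi3; simp only [Nat.min_def, Nat.max_def]; split_ifs <;> omega)
    (by unfold hi3; simp only [Fin.val_last, Nat.min_def, Nat.max_def]; split_ifs <;> omega)

lemma symval_oob {n : ℕ} (g : tri n → ℝ) {x y z : ℕ} (h : n ≤ hi3 x y z) :
    symval n g x y z = 0 := by
  rw [symval, dif_neg (by omega)]

lemma symm3_sorted (g : ℕ → ℕ → ℕ → ℝ) (h12 : ∀ x y z, g x y z = g y x z)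
    (h23 : ∀ x y z, g x y z = g x z y) (x y z : ℕ) :
    g x y z = g (lo3 x y z) (mid3 x y z) (hi3 x y z) := by
  have h13 : ∀ x y z, g x y z = g z y x := fun a b c => by rw [h23, h12, h23]
  have hperm : ∀ a b c : ℕ, ((a = x ∧ b = y ∧ c = z) ∨ (a = x ∧ b = z ∧ c = y)
      ∨ (a = y ∧ b = x ∧ c = z) ∨ (a = y ∧ b = z ∧ c = x)
      ∨ (a = z ∧ b = x ∧ c = y) ∨ (a = z ∧ b = y ∧ c = x)) → g x y z = g a b c := by
    rintro a b c (⟨ha, hb, hc⟩ | ⟨ha, hb, hc⟩ | ⟨ha, hb, hc⟩ | ⟨ha, hb, hc⟩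
      | ⟨ha, hb, hc⟩ | ⟨ha, hb, hc⟩) <;> rw [ha, hb, hc]
    · exact h23 x y z
    · exact h12 x y z
    · exact (h12 x y z).trans (h23 y x z)
    · exact (h23 x y z).trans (h12 x z y)
    · exact h13 x y z
  rcases Nat.le_total x y with hxy | hxy <;> rcases Nat.le_total y z with hyz | hyz <;>
    rcases Nat.le_total x z with hxz | hxz
  · exact hperm _ _ _ (by left; unfold mid3 lo3 hi3; simp only [Nat.min_def, Nat.max_def]; split_ifs <;> omega)
  · exact hperm _ _ _ (by left; unfold mid3 lo3 hi3; simp only [Nat.min_def, Nat.max_def]; split_ifs <;> omega)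
  · exact hperm _ _ _ (by right; left; unfold mid3 lo3 hi3; simp only [Nat.min_def, Nat.max_def]; split_ifs <;> omega)
  · exact hperm _ _ _ (by right; right; right; right; left; unfold mid3 lo3 hi3; simp only [Nat.min_def, Nat.max_def]; split_ifs <;> omega)
  · exact hperm _ _ _ (by right; right; left; unfold mid3 lo3 hi3; simp only [Nat.min_def, Nat.max_def]; split_ifs <;> omega)
  · exact hperm _ _ _ (by right; right; right; left; unfold mid3 lo3 hi3; simp only [Nat.min_def, Nat.max_def]; split_ifs <;> omega)
  · exact hperm _ _ _ (by right; right; right; left; unfold mid3 lo3 hi3; simp only [Nat.min_def, Nat.max_def]; split_ifs <;> omega)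
  · exact hperm _ _ _ (by right; right; right; right; right; unfold mid3 lo3 hi3; simp only [Nat.min_def, Nat.max_def]; split_ifs <;> omega)

def sig2 (N : ℕ) := tri (N+1) ⊕ (tri N ⊕ tri N)

instance : Fintype (sig2 N) := by unfold sig2; infer_instance

def recon2 (N : ℕ) (f : sig2 N → ℝ) : Idx (N+1) → Idx (N+1) → Fin (N+1) → ℝ :=
  fun w1 w2 c => match w1, w2 with
  | .inl a, .inl b => symval (N+1) (fun t => f (.inl t)) (a : ℕ) (b : ℕ) (c : ℕ)
  | .inl a, .inr b => symval N (fun t => f (.inr (.inl t))) (a : ℕ) (b : ℕ) (c : ℕ)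
  | .inr a, .inl b => symval N (fun t => f (.inr (.inl t))) (b : ℕ) (a : ℕ) (c : ℕ)
  | .inr a, .inr b => symval N (fun t => f (.inr (.inr t))) (a : ℕ) (b : ℕ) (c : ℕ)

def resF2 (N : ℕ) (B : Idx (N+1) → Idx (N+1) → Fin (N+1) → ℝ) (x : sig2 N) : ℝ :=
  match x with
  | .inl ⟨k, j, i⟩ => B (.inl ⟨(i : ℕ), by have := i.isLt; have := j.isLt; have := k.isLt; omega⟩)
      (.inl ⟨(j : ℕ), by have := j.isLt; have := k.isLt; omega⟩) ⟨(k : ℕ), k.isLt⟩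
  | .inr (.inl ⟨k, j, i⟩) =>
      B (.inl ⟨(i : ℕ), by have := i.isLt; have := j.isLt; have := k.isLt; omega⟩)
        (.inr ⟨(j : ℕ), by have := j.isLt; have := k.isLt; omega⟩)
        ⟨(k : ℕ), by have := k.isLt; omega⟩
  | .inr (.inr ⟨k, j, i⟩) =>
      B (.inr ⟨(i : ℕ), by have := i.isLt; have := j.isLt; have := k.isLt; omega⟩)
        (.inr ⟨(j : ℕ), by have := j.isLt; have := k.isLt; omega⟩)
        ⟨(k : ℕ), by have := k.isLt; omega⟩

lemma recon2_mem (f : sig2 N → ℝ) :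
    recon2 N f ∈ g2 (Pi.single (Fin.last N) (1:ℝ)) := by
  constructor
  · intro w1 w2
    funext c
    cases w1 with
    | inl a => cases w2 with
      | inl b =>
        show symval (N+1) (fun t => f (.inl t)) (a : ℕ) (b : ℕ) (c : ℕ)
          = symval (N+1) (fun t => f (.inl t)) (b : ℕ) (a : ℕ) (c : ℕ)
        exact symval_swap12 _ _ _ _
      | inr b => rfl
    | inr a => cases w2 with
      | inl b => rfl
      | inr b =>
        show symval N (fun t => f (.inr (.inr t))) (a : ℕ) (b : ℕ) (c : ℕ)
          = symval N (fun t => f (.inr (.inr t))) (b : ℕ) (a : ℕ) (c : ℕ)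
        exact symval_swap12 _ _ _ _
  · intro w
    cases w with
    | inl a =>
      refine ⟨fun j => ?_, fun i j => ?_, fun i j => ?_⟩
      · rw [sum_single_mul (Fin.last N) (fun i => recon2 N f (.inl a) (Sum.inr i) j)]
        show symval N (fun t => f (.inr (.inl t))) (a : ℕ) ((Fin.last N : Fin (N+1)) : ℕ) (j : ℕ) = 0
        exact symval_oob _ (by
          unfold hi3; simp only [Fin.val_last, Nat.min_def, Nat.max_def]; split_ifs <;> omega)
      · show symval N (fun t => f (.inr (.inl t))) (a : ℕ) (i : ℕ) (j : ℕ)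
          = symval N (fun t => f (.inr (.inl t))) (a : ℕ) (j : ℕ) (i : ℕ)
        exact symval_swap23 _ _ _ _
      · show symval (N+1) (fun t => f (.inl t)) (a : ℕ) (i : ℕ) (j : ℕ)
          = symval (N+1) (fun t => f (.inl t)) (a : ℕ) (j : ℕ) (i : ℕ)
        exact symval_swap23 _ _ _ _
    | inr a =>
      refine ⟨fun j => ?_, fun i j => ?_, fun i j => ?_⟩
      · rw [sum_single_mul (Fin.last N) (fun i => recon2 N f (.inr a) (Sum.inr i) j)]
        show symval N (fun t => f (.inr (.inr t))) (a : ℕ) ((Fin.last N : Fin (N+1)) : ℕ) (j : ℕ) = 0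
        exact symval_oob _ (by
          unfold hi3; simp only [Fin.val_last, Nat.min_def, Nat.max_def]; split_ifs <;> omega)
      · show symval N (fun t => f (.inr (.inr t))) (a : ℕ) (i : ℕ) (j : ℕ)
          = symval N (fun t => f (.inr (.inr t))) (a : ℕ) (j : ℕ) (i : ℕ)
        exact symval_swap23 _ _ _ _
      · show symval N (fun t => f (.inr (.inl t))) (i : ℕ) (a : ℕ) (j : ℕ)
          = symval N (fun t => f (.inr (.inl t))) (j : ℕ) (a : ℕ) (i : ℕ)
        exact symval_swap13 _ _ _ _

def GUf (N : ℕ) (B : Idx (N+1) → Idx (N+1) → Fin (N+1) → ℝ) (x y z : ℕ) : ℝ :=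
  if h : x < N + 1 ∧ y < N + 1 ∧ z < N + 1 then
    B (.inl ⟨x, h.1⟩) (.inl ⟨y, h.2.1⟩) ⟨z, h.2.2⟩ else 0

def GVf (N : ℕ) (B : Idx (N+1) → Idx (N+1) → Fin (N+1) → ℝ) (x y z : ℕ) : ℝ :=
  if h : x < N + 1 ∧ y < N + 1 ∧ z < N + 1 then
    B (.inl ⟨x, h.1⟩) (.inr ⟨y, h.2.1⟩) ⟨z, h.2.2⟩ else 0

def GWf (N : ℕ) (B : Idx (N+1) → Idx (N+1) → Fin (N+1) → ℝ) (x y z : ℕ) : ℝ :=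
  if h : x < N + 1 ∧ y < N + 1 ∧ z < N + 1 then
    B (.inr ⟨x, h.1⟩) (.inr ⟨y, h.2.1⟩) ⟨z, h.2.2⟩ else 0

lemma recon2_resF2 {B : Idx (N+1) → Idx (N+1) → Fin (N+1) → ℝ}
    (hB : B ∈ g2 (Pi.single (Fin.last N) (1:ℝ))) : recon2 N (resF2 N B) = B := by
  obtain ⟨hsym, hrow⟩ := hB
  have hvan : ∀ (w : Idx (N+1)) (j : Fin (N+1)), B w (.inr (Fin.last N)) j = 0 := by
    intro w j
    have := (hrow w).1 j
    rwa [sum_single_mul (Fin.last N) (fun i => B w (Sum.inr i) j)] at this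
  -- totalized component functions
  have gu_eval : ∀ x y z (hx : x < N + 1) (hy : y < N + 1) (hz : z < N + 1),
      (GUf N B) x y z = B (.inl ⟨x, hx⟩) (.inl ⟨y, hy⟩) ⟨z, hz⟩ := by
    intro x y z hx hy hz
    unfold GUf
    exact dif_pos ⟨hx, hy, hz⟩
  have gv_eval : ∀ x y z (hx : x < N + 1) (hy : y < N + 1) (hz : z < N + 1),
      (GVf N B) x y z = B (.inl ⟨x, hx⟩) (.inr ⟨y, hy⟩) ⟨z, hz⟩ := by
    intro x y z hx hy hz
    unfold GVf
    exact dif_pos ⟨hx, hy, hz⟩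
  have gw_eval : ∀ x y z (hx : x < N + 1) (hy : y < N + 1) (hz : z < N + 1),
      (GWf N B) x y z = B (.inr ⟨x, hx⟩) (.inr ⟨y, hy⟩) ⟨z, hz⟩ := by
    intro x y z hx hy hz
    unfold GWf
    exact dif_pos ⟨hx, hy, hz⟩
  have oob : ∀ (G : ℕ → ℕ → ℕ → ℝ), (G = (GUf N B) ∨ G = (GVf N B) ∨ G = (GWf N B)) → ∀ x y z,
      ¬ (x < N + 1 ∧ y < N + 1 ∧ z < N + 1) → G x y z = 0 := by
    rintro G (rfl | rfl | rfl) x y z h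
    · unfold GUf; exact dif_neg h
    · unfold GVf; exact dif_neg h
    · unfold GWf; exact dif_neg h
  have gu12 : ∀ x y z, (GUf N B) x y z = (GUf N B) y x z := by
    intro x y z
    by_cases h : x < N + 1 ∧ y < N + 1 ∧ z < N + 1
    · rw [gu_eval x y z h.1 h.2.1 h.2.2, gu_eval y x z h.2.1 h.1 h.2.2]
      exact congrFun (hsym (.inl ⟨x, h.1⟩) (.inl ⟨y, h.2.1⟩)) ⟨z, h.2.2⟩
    · rw [oob (GUf N B) (by tauto) x y z h, oob (GUf N B) (by tauto) y x z (by tauto)]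
  have gu23 : ∀ x y z, (GUf N B) x y z = (GUf N B) x z y := by
    intro x y z
    by_cases h : x < N + 1 ∧ y < N + 1 ∧ z < N + 1
    · rw [gu_eval x y z h.1 h.2.1 h.2.2, gu_eval x z y h.1 h.2.2 h.2.1]
      exact (hrow (.inl ⟨x, h.1⟩)).2.2 ⟨y, h.2.1⟩ ⟨z, h.2.2⟩
    · rw [oob (GUf N B) (by tauto) x y z h, oob (GUf N B) (by tauto) x z y (by tauto)]
  have gv23 : ∀ x y z, (GVf N B) x y z = (GVf N B) x z y := by
    intro x y z
    by_cases h : x < N + 1 ∧ y < N + 1 ∧ z < N + 1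
    · rw [gv_eval x y z h.1 h.2.1 h.2.2, gv_eval x z y h.1 h.2.2 h.2.1]
      exact (hrow (.inl ⟨x, h.1⟩)).2.1 ⟨y, h.2.1⟩ ⟨z, h.2.2⟩
    · rw [oob (GVf N B) (by tauto) x y z h, oob (GVf N B) (by tauto) x z y (by tauto)]
  have gv13 : ∀ x y z, (GVf N B) x y z = (GVf N B) z y x := by
    intro x y z
    by_cases h : x < N + 1 ∧ y < N + 1 ∧ z < N + 1
    · rw [gv_eval x y z h.1 h.2.1 h.2.2, gv_eval z y x h.2.2 h.2.1 h.1]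
      calc B (.inl ⟨x, h.1⟩) (.inr ⟨y, h.2.1⟩) ⟨z, h.2.2⟩
          = B (.inr ⟨y, h.2.1⟩) (.inl ⟨x, h.1⟩) ⟨z, h.2.2⟩ :=
            congrFun (hsym (.inl ⟨x, h.1⟩) (.inr ⟨y, h.2.1⟩)) ⟨z, h.2.2⟩
        _ = B (.inr ⟨y, h.2.1⟩) (.inl ⟨z, h.2.2⟩) ⟨x, h.1⟩ :=
            (hrow (.inr ⟨y, h.2.1⟩)).2.2 ⟨x, h.1⟩ ⟨z, h.2.2⟩
        _ = B (.inl ⟨z, h.2.2⟩) (.inr ⟨y, h.2.1⟩) ⟨x, h.1⟩ :=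
            congrFun (hsym (.inr ⟨y, h.2.1⟩) (.inl ⟨z, h.2.2⟩)) ⟨x, h.1⟩
    · rw [oob (GVf N B) (by tauto) x y z h, oob (GVf N B) (by tauto) z y x (by tauto)]
  have gv12 : ∀ x y z, (GVf N B) x y z = (GVf N B) y x z := by
    intro x y z
    rw [gv13, gv23, gv13]
  have gw12 : ∀ x y z, (GWf N B) x y z = (GWf N B) y x z := by
    intro x y z
    by_cases h : x < N + 1 ∧ y < N + 1 ∧ z < N + 1
    · rw [gw_eval x y z h.1 h.2.1 h.2.2, gw_eval y x z h.2.1 h.1 h.2.2]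
      exact congrFun (hsym (.inr ⟨x, h.1⟩) (.inr ⟨y, h.2.1⟩)) ⟨z, h.2.2⟩
    · rw [oob (GWf N B) (by tauto) x y z h, oob (GWf N B) (by tauto) y x z (by tauto)]
  have gw23 : ∀ x y z, (GWf N B) x y z = (GWf N B) x z y := by
    intro x y z
    by_cases h : x < N + 1 ∧ y < N + 1 ∧ z < N + 1
    · rw [gw_eval x y z h.1 h.2.1 h.2.2, gw_eval x z y h.1 h.2.2 h.2.1]
      exact (hrow (.inr ⟨x, h.1⟩)).2.1 ⟨y, h.2.1⟩ ⟨z, h.2.2⟩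
    · rw [oob (GWf N B) (by tauto) x y z h, oob (GWf N B) (by tauto) x z y (by tauto)]
  have gvlast : ∀ x z (hx : x < N + 1) (hz : z < N + 1), (GVf N B) x N z = 0 := by
    intro x z hx hz
    rw [gv_eval x N z hx (by omega) hz]
    exact hvan (.inl ⟨x, hx⟩) ⟨z, hz⟩
  have gwlast : ∀ x z (hx : x < N + 1) (hz : z < N + 1), (GWf N B) x N z = 0 := by
    intro x z hx hz
    rw [gw_eval x N z hx (by omega) hz]
    exact hvan (.inr ⟨x, hx⟩) ⟨z, hz⟩
  -- the three reconstruction facts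
  have factU : ∀ a b c : Fin (N+1),
      symval (N+1) (fun t => resF2 N B (.inl t)) (a : ℕ) (b : ℕ) (c : ℕ)
        = B (.inl a) (.inl b) c := by
    intro a b c
    have ha := a.isLt; have hb := b.isLt; have hc := c.isLt
    have hin : hi3 (a : ℕ) (b : ℕ) (c : ℕ) < N + 1 := by
      unfold hi3; simp only [Nat.max_def]; split_ifs <;> omega
    have h1 := lo3_le_mid3 (a : ℕ) (b : ℕ) (c : ℕ)
    have h2 := mid3_le_hi3 (a : ℕ) (b : ℕ) (c : ℕ)
    rw [symval, dif_pos hin]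
    rw [show resF2 N B (.inl (mk3 (N+1) _ _ _ h1 h2 hin))
      = B (.inl ⟨lo3 (a : ℕ) (b : ℕ) (c : ℕ), by omega⟩)
        (.inl ⟨mid3 (a : ℕ) (b : ℕ) (c : ℕ), by omega⟩)
        ⟨hi3 (a : ℕ) (b : ℕ) (c : ℕ), hin⟩ from rfl]
    rw [← gu_eval _ _ _ (by omega) (by omega) hin]
    rw [← symm3_sorted (GUf N B) gu12 gu23 (a : ℕ) (b : ℕ) (c : ℕ)]
    rw [gu_eval _ _ _ (by omega) (by omega) (by omega)]
  have factV : ∀ a b c : Fin (N+1),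
      symval N (fun t => resF2 N B (.inr (.inl t))) (a : ℕ) (b : ℕ) (c : ℕ)
        = B (.inl a) (.inr b) c := by
    intro a b c
    have ha := a.isLt; have hb := b.isLt; have hc := c.isLt
    have h1 := lo3_le_mid3 (a : ℕ) (b : ℕ) (c : ℕ)
    have h2 := mid3_le_hi3 (a : ℕ) (b : ℕ) (c : ℕ)
    have hhile : hi3 (a : ℕ) (b : ℕ) (c : ℕ) ≤ N := by
      unfold hi3; simp only [Nat.max_def]; split_ifs <;> omega
    by_cases hin : hi3 (a : ℕ) (b : ℕ) (c : ℕ) < N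
    · rw [symval, dif_pos hin]
      rw [show resF2 N B (.inr (.inl (mk3 N _ _ _ h1 h2 hin)))
        = B (.inl ⟨lo3 (a : ℕ) (b : ℕ) (c : ℕ), by omega⟩)
          (.inr ⟨mid3 (a : ℕ) (b : ℕ) (c : ℕ), by omega⟩)
          ⟨hi3 (a : ℕ) (b : ℕ) (c : ℕ), by omega⟩ from rfl]
      rw [← gv_eval _ _ _ (by omega) (by omega) (by omega)]
      rw [← symm3_sorted (GVf N B) gv12 gv23 (a : ℕ) (b : ℕ) (c : ℕ)]
      rw [gv_eval _ _ _ (by omega) (by omega) (by omega)]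
    · rw [symval_oob _ (by omega)]
      have hhiN : hi3 (a : ℕ) (b : ℕ) (c : ℕ) = N := by
        unfold hi3 at hin ⊢; omega
      have hs := symm3_sorted (GVf N B) gv12 gv23 (a : ℕ) (b : ℕ) (c : ℕ)
      rw [hhiN] at hs
      have hz : (GVf N B) (lo3 (a : ℕ) (b : ℕ) (c : ℕ)) (mid3 (a : ℕ) (b : ℕ) (c : ℕ)) N = 0 := by
        rw [gv23]
        exact gvlast _ _ (by omega) (by omega)
      rw [hz] at hs
      rw [gv_eval _ _ _ (by omega) (by omega) (by omega)] at hs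
      exact hs.symm
  have factW : ∀ a b c : Fin (N+1),
      symval N (fun t => resF2 N B (.inr (.inr t))) (a : ℕ) (b : ℕ) (c : ℕ)
        = B (.inr a) (.inr b) c := by
    intro a b c
    have ha := a.isLt; have hb := b.isLt; have hc := c.isLt
    have h1 := lo3_le_mid3 (a : ℕ) (b : ℕ) (c : ℕ)
    have h2 := mid3_le_hi3 (a : ℕ) (b : ℕ) (c : ℕ)
    have hhile : hi3 (a : ℕ) (b : ℕ) (c : ℕ) ≤ N := by
      unfold hi3; simp only [Nat.max_def]; split_ifs <;> omega
    by_cases hin : hi3 (a : ℕ) (b : ℕ) (c : ℕ) < N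
    · rw [symval, dif_pos hin]
      rw [show resF2 N B (.inr (.inr (mk3 N _ _ _ h1 h2 hin)))
        = B (.inr ⟨lo3 (a : ℕ) (b : ℕ) (c : ℕ), by omega⟩)
          (.inr ⟨mid3 (a : ℕ) (b : ℕ) (c : ℕ), by omega⟩)
          ⟨hi3 (a : ℕ) (b : ℕ) (c : ℕ), by omega⟩ from rfl]
      rw [← gw_eval _ _ _ (by omega) (by omega) (by omega)]
      rw [← symm3_sorted (GWf N B) gw12 gw23 (a : ℕ) (b : ℕ) (c : ℕ)]
      rw [gw_eval _ _ _ (by omega) (by omega) (by omega)]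
    · rw [symval_oob _ (by omega)]
      have hhiN : hi3 (a : ℕ) (b : ℕ) (c : ℕ) = N := by
        unfold hi3 at hin ⊢; omega
      have hs := symm3_sorted (GWf N B) gw12 gw23 (a : ℕ) (b : ℕ) (c : ℕ)
      rw [hhiN] at hs
      have hz : (GWf N B) (lo3 (a : ℕ) (b : ℕ) (c : ℕ)) (mid3 (a : ℕ) (b : ℕ) (c : ℕ)) N = 0 := by
        rw [gw23]
        exact gwlast _ _ (by omega) (by omega)
      rw [hz] at hs
      rw [gw_eval _ _ _ (by omega) (by omega) (by omega)] at hs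
      exact hs.symm
  funext w1 w2 c
  cases w1 with
  | inl a => cases w2 with
    | inl b => exact factU a b c
    | inr b => exact factV a b c
  | inr a => cases w2 with
    | inl b => exact (factV b a c).trans (congrFun (hsym (.inl b) (.inr a)) c)
    | inr b => exact factW a b c

lemma resF2_recon2 (f : sig2 N → ℝ) : resF2 N (recon2 N f) = f := by
  funext x
  rcases x with ⟨k, j, i⟩ | (⟨k, j, i⟩ | ⟨k, j, i⟩)
  · show symval (N+1) (fun t => f (.inl t)) (i : ℕ) (j : ℕ) (k : ℕ) = _
    have hi := i.isLt; have hj := j.isLt; have hk := k.isLt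
    rw [symval, dif_pos (by
      unfold hi3; simp only [Nat.max_def]; split_ifs <;> omega)]
    calc (fun t => f (.inl t)) (mk3 (N+1) _ _ _ (lo3_le_mid3 _ _ _) (mid3_le_hi3 _ _ _) _)
        = f (.inl (mk3 (N+1) (i : ℕ) (j : ℕ) (k : ℕ)
            (Nat.lt_succ_iff.mp i.isLt) (Nat.lt_succ_iff.mp j.isLt) k.isLt)) :=
          tri_congr (fun t => f (.inl t))
            (by unfold lo3; simp only [Nat.min_def]; split_ifs <;> omega)
            (by unfold mid3 lo3 hi3; simp only [Nat.min_def, Nat.max_def]; split_ifs <;> omega)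
            (by unfold hi3; simp only [Nat.max_def]; split_ifs <;> omega)
      _ = f (.inl ⟨k, j, i⟩) := rfl
  · show symval N (fun t => f (.inr (.inl t))) (i : ℕ) (j : ℕ) (k : ℕ) = _
    have hi := i.isLt; have hj := j.isLt; have hk := k.isLt
    rw [symval, dif_pos (by
      unfold hi3; simp only [Nat.max_def]; split_ifs <;> omega)]
    calc (fun t => f (.inr (.inl t))) (mk3 N _ _ _ (lo3_le_mid3 _ _ _) (mid3_le_hi3 _ _ _) _)
        = f (.inr (.inl (mk3 N (i : ℕ) (j : ℕ) (k : ℕ)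
            (Nat.lt_succ_iff.mp i.isLt) (Nat.lt_succ_iff.mp j.isLt) k.isLt))) :=
          tri_congr (fun t => f (.inr (.inl t)))
            (by unfold lo3; simp only [Nat.min_def]; split_ifs <;> omega)
            (by unfold mid3 lo3 hi3; simp only [Nat.min_def, Nat.max_def]; split_ifs <;> omega)
            (by unfold hi3; simp only [Nat.max_def]; split_ifs <;> omega)
      _ = f (.inr (.inl ⟨k, j, i⟩)) := rfl
  · show symval N (fun t => f (.inr (.inr t))) (i : ℕ) (j : ℕ) (k : ℕ) = _
    have hi := i.isLt; have hj := j.isLt; have hk := k.isLt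
    rw [symval, dif_pos (by
      unfold hi3; simp only [Nat.max_def]; split_ifs <;> omega)]
    calc (fun t => f (.inr (.inr t))) (mk3 N _ _ _ (lo3_le_mid3 _ _ _) (mid3_le_hi3 _ _ _) _)
        = f (.inr (.inr (mk3 N (i : ℕ) (j : ℕ) (k : ℕ)
            (Nat.lt_succ_iff.mp i.isLt) (Nat.lt_succ_iff.mp j.isLt) k.isLt))) :=
          tri_congr (fun t => f (.inr (.inr t)))
            (by unfold lo3; simp only [Nat.min_def]; split_ifs <;> omega)
            (by unfold mid3 lo3 hi3; simp only [Nat.min_def, Nat.max_def]; split_ifs <;> omega)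
            (by unfold hi3; simp only [Nat.max_def]; split_ifs <;> omega)
      _ = f (.inr (.inr ⟨k, j, i⟩)) := rfl

def equivStd2 : (g2 (Pi.single (Fin.last N) (1:ℝ))) ≃ₗ[ℝ] (sig2 N → ℝ) where
  toFun B := resF2 N B.val
  map_add' A B := by funext x; rcases x with ⟨k, j, i⟩ | (⟨k, j, i⟩ | ⟨k, j, i⟩) <;> rfl
  map_smul' r A := by funext x; rcases x with ⟨k, j, i⟩ | (⟨k, j, i⟩ | ⟨k, j, i⟩) <;> rfl
  invFun f := ⟨recon2 N f, recon2_mem f⟩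
  left_inv B := Subtype.ext (recon2_resF2 B.property)
  right_inv f := resF2_recon2 f

def c3 (n : ℕ) : ℕ := ∑ k ∈ Finset.range n, ∑ j ∈ Finset.range (k + 1), (j + 1)

lemma card_tri (n : ℕ) : Fintype.card (tri n) = c3 n := by
  unfold tri c3
  rw [Fintype.card_sigma]
  rw [← Fin.sum_univ_eq_sum_range (fun k => ∑ j ∈ Finset.range (k + 1), (j + 1)) n]
  refine Finset.sum_congr rfl fun k _ => ?_
  rw [Fintype.card_sigma]
  rw [← Fin.sum_univ_eq_sum_range (fun j => j + 1) ((k : ℕ) + 1)]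
  exact Finset.sum_congr rfl fun j _ => Fintype.card_fin _

lemma finrank_g2Std :
    Module.finrank ℝ (g2 (Pi.single (Fin.last N) (1:ℝ))) = c3 (N + 1) + (c3 N + c3 N) := by
  rw [LinearEquiv.finrank_eq (equivStd2 (N := N))]
  rw [Module.finrank_fintype_fun_eq_card]
  unfold sig2
  rw [Fintype.card_sum, Fintype.card_sum, card_tri, card_tri]

lemma tK (K : ℕ) : 2 * ∑ j ∈ Finset.range K, (j + 1) = K * (K + 1) := by
  induction K with
  | zero => simp
  | succ L ih =>
    rw [Finset.sum_range_succ]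
    have hr : (L + 1) * (L + 1 + 1) = L * (L + 1) + 2 * (L + 1) := by ring
    omega

lemma c3_6 (n : ℕ) : 6 * c3 n = n * (n + 1) * (n + 2) := by
  induction n with
  | zero => simp [c3]
  | succ L ih =>
    have hstep : c3 (L + 1) = c3 L + ∑ j ∈ Finset.range (L + 1), (j + 1) :=
      Finset.sum_range_succ _ _
    have ht := tK (L + 1)
    have hr : (L + 1) * (L + 1 + 1) * (L + 1 + 2)
        = L * (L + 1) * (L + 2) + 3 * ((L + 1) * (L + 1 + 1)) := by ring
    omega

end StdG2

set_option maxHeartbeats 1000000 in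
/-- Involutivity of the symbol `σ¹` of the projective metrizability operator:
if `ε₁,…,εₙ` is a basis of `ℝⁿ` with `εₙ = y`, then the basis `elist ε` of `W`
is quasi-regular, i.e. `dim g² = dim g¹ + Σ_{j=1}^{2n} dim g¹_{e₁,…,e_j}`;
moreover `dim g¹_{e₁,…,e_j} = n(n−j)` for `1 ≤ j ≤ n` and
`dim g¹_{e₁,…,e_{n+j}} = 0` for `1 ≤ j ≤ n`. -/
theorem symbol_involutive {n : ℕ} (hn : 1 ≤ n) (y : Vn n) (hy : y ≠ 0)
    (ε : Module.Basis (Fin n) ℝ (Vn n)) (hε : ε ⟨n - 1, by omega⟩ = y) :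
    (Module.finrank ℝ (g2 y)
      = Module.finrank ℝ (g1 y)
        + ∑ j ∈ Finset.range (2 * n), Module.finrank ℝ (g1pref y ⇑ε (j + 1))) ∧
    (∀ j : ℕ, 1 ≤ j → j ≤ n → Module.finrank ℝ (g1pref y ⇑ε j) = n * (n - j)) ∧
    (∀ j : ℕ, 1 ≤ j → j ≤ n → Module.finrank ℝ (g1pref y ⇑ε (n + j)) = 0) := by
  obtain ⟨N, rfl⟩ : ∃ N, n = N + 1 := ⟨n - 1, by omega⟩
  have hεy : ∀ i, Mb ε (Fin.last N) i = y i := by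
    intro i
    exact congrFun hε i
  have key : ∀ m : ℕ, m ≤ N + 1 →
      Module.finrank ℝ (g1pref y (⇑ε) m) = (N + 1) * (N + 1 - m) := by
    intro m hm
    have h1 : Module.finrank ℝ (g1pref y (⇑ε) m)
        = Module.finrank ℝ (g1pref (Pi.single (Fin.last N) (1:ℝ)) (eps0 (N+1)) m) := by
      rw [← map_g1pref ε hεy m]
      exact (LinearEquiv.finrank_map_eq (conjEb ε) _).symm
    rw [h1]
    exact finrank_g1prefStd hm
  have keyAll : ∀ m : ℕ, Module.finrank ℝ (g1pref y (⇑ε) m) = (N + 1) * (N + 1 - m) := by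
    intro m
    rcases Nat.le_total m (N + 1) with hm | hm
    · exact key m hm
    · have hmono : g1pref y (⇑ε) m ≤ g1pref y (⇑ε) (N + 1) := by
        intro A hA
        rw [mem_g1pref_iff] at hA ⊢
        exact ⟨hA.1, fun k hk => hA.2 k (by omega)⟩
      have h0 : Module.finrank ℝ (g1pref y (⇑ε) (N + 1)) = 0 := by
        rw [key (N + 1) le_rfl, Nat.sub_self, mul_zero]
      have hle := Submodule.finrank_mono hmono
      rw [Nat.sub_eq_zero_of_le hm, mul_zero]
      omega
  have hg1 : g1 y = g1pref y (⇑ε) 0 := by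
    unfold g1pref
    have htop : (⨅ (k : Fin (2 * (N + 1))) (_ : (k : ℕ) < 0), evKer (elist (⇑ε) k)) = ⊤ := by
      ext A
      simp [Submodule.mem_iInf]
    rw [htop, inf_top_eq]
  refine ⟨?_, ?_, ?_⟩
  · have hg2 : Module.finrank ℝ (g2 y) = c3 (N + 1) + (c3 N + c3 N) := by
      have h1 : Module.finrank ℝ (g2 y)
          = Module.finrank ℝ (g2 (Pi.single (Fin.last N) (1:ℝ))) := by
        rw [← map_g2 ε hεy]
        exact (LinearEquiv.finrank_map_eq (conjBEb ε) _).symm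
      exact h1.trans finrank_g2Std
    rw [hg2, hg1, keyAll 0]
    have hsum : ∑ j ∈ Finset.range (2 * (N + 1)), Module.finrank ℝ (g1pref y (⇑ε) (j + 1))
        = ∑ j ∈ Finset.range (2 * (N + 1)), (N + 1) * (N + 1 - (j + 1)) :=
      Finset.sum_congr rfl fun j _ => keyAll (j + 1)
    rw [hsum]
    have hsub : ∑ j ∈ Finset.range (2 * (N + 1)), (N + 1) * (N + 1 - (j + 1))
        = ∑ j ∈ Finset.range (N + 1), (N + 1) * (N + 1 - (j + 1)) := by
      symm
      apply Finset.sum_subset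
      · intro x hx
        rw [Finset.mem_range] at hx ⊢
        omega
      · intro x hx hnx
        rw [Finset.mem_range] at hx
        rw [Finset.mem_range] at hnx
        rw [show N + 1 - (x + 1) = 0 by omega, mul_zero]
    rw [hsub, ← Finset.mul_sum]
    have hrefl : ∑ j ∈ Finset.range (N + 1), (N + 1 - (j + 1))
        = ∑ j ∈ Finset.range (N + 1), j := by
      rw [← Finset.sum_range_reflect (fun j => j) (N + 1)]
      exact Finset.sum_congr rfl fun j hj => by
        rw [Finset.mem_range] at hj
        omega
    rw [hrefl]
    have hG : 2 * (∑ j ∈ Finset.range (N + 1), j) = (N + 1) * N := by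
      have h := Finset.sum_range_id_mul_two (N + 1)
      have e : N + 1 - 1 = N := rfl
      rw [e] at h
      omega
    have h1 := c3_6 (N + 1)
    have h2 := c3_6 N
    have hmain : 6 * (c3 (N + 1) + (c3 N + c3 N))
        = 6 * ((N + 1) * (N + 1 - 0) + (N + 1) * (∑ j ∈ Finset.range (N + 1), j)) := by
      calc 6 * (c3 (N + 1) + (c3 N + c3 N)) = 6 * c3 (N + 1) + 2 * (6 * c3 N) := by ring
        _ = (N + 1) * (N + 1 + 1) * (N + 1 + 2) + 2 * (N * (N + 1) * (N + 2)) := by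
            rw [h1, h2]
        _ = 6 * ((N + 1) * (N + 1)) + 3 * ((N + 1) * ((N + 1) * N)) := by ring
        _ = 6 * ((N + 1) * (N + 1))
            + 3 * ((N + 1) * (2 * (∑ j ∈ Finset.range (N + 1), j))) := by rw [hG]
        _ = 6 * ((N + 1) * (N + 1 - 0) + (N + 1) * (∑ j ∈ Finset.range (N + 1), j)) := by
            rw [show N + 1 - 0 = N + 1 from rfl]; ring
    omega
  · intro j hj1 hj2
    exact keyAll j
  · intro j hj1 hj2
    rw [keyAll (N + 1 + j), show N + 1 - (N + 1 + j) = 0 by omega, mul_zero]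

end PM
end

section
/- Fix n ≥ 1 and a nonzero y ∈ ℝⁿ. Define τ : (W*⊗(ℝⁿ)*) ⊕ (W*⊗Λ²(ℝⁿ)*) ⊕ (W*⊗Λ²(ℝⁿ)*) → Λ²(ℝⁿ)* ⊕ Λ²(ℝⁿ)* ⊕ Λ³(ℝⁿ)* ⊕ Λ³(ℝⁿ)* ⊕ Λ³(ℝⁿ)* by τ(A, B₁, B₂) = (τ_J A − i_C B₁, τ_h A − i_C B₂, τ_J B₁, τ_h B₂, τ_h B₁ + τ_J B₂). Then the sequence S²W*⊗(ℝⁿ)* →^{σ²} W*⊗((ℝⁿ)* ⊕ Λ²(ℝⁿ)* ⊕ Λ²(ℝⁿ)*) →^{τ} (5-fold sum above) is exact: ker τ = im σ². (This exactness identifies the cokernel of σ²(P₁) and is the key linear-algebra step in locating the unique obstruction to formal integrability of the projective metrizability operator.) -/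
namespace PM

/-- Symmetric coordinate tensors: the model of `S²W*⊗(ℝⁿ)*`. -/
def SymB (n : ℕ) : Set (Idx n → Idx n → Fin n → ℝ) := {B | ∀ a b, B a b = B b a}

/-- The first prolongation `σ²` of the symbol, in coordinates:
`(σ²B)(w) = σ¹(B(w,·)) = (i_C B(w,·), τ_J B(w,·), τ_h B(w,·))`. -/
noncomputable def sigma2 {n : ℕ} (y : Vn n) (B : Idx n → Idx n → Fin n → ℝ) :
    (Idx n → Fin n → ℝ) × (Idx n → Fin n → Fin n → ℝ) × (Idx n → Fin n → Fin n → ℝ) :=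
  (fun a j => ∑ i, y i * B a (Sum.inr i) j,
   fun a i j => B a (Sum.inr i) j - B a (Sum.inr j) i,
   fun a i j => B a (Sum.inl i) j - B a (Sum.inl j) i)

/-- The map `τ(A, B₁, B₂) = (τ_J A − i_C B₁, τ_h A − i_C B₂, τ_J B₁, τ_h B₂,
τ_h B₁ + τ_J B₂)`, in coordinates, with `C = (0, y)`. -/
noncomputable def tau {n : ℕ} (y : Vn n)
    (v : (Idx n → Fin n → ℝ) × (Idx n → Fin n → Fin n → ℝ) × (Idx n → Fin n → Fin n → ℝ)) :
    (Fin n → Fin n → ℝ) × (Fin n → Fin n → ℝ) × (Fin n → Fin n → Fin n → ℝ)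
      × (Fin n → Fin n → Fin n → ℝ) × (Fin n → Fin n → Fin n → ℝ) :=
  (fun i j => (v.1 (Sum.inr i) j - v.1 (Sum.inr j) i) - ∑ k, y k * v.2.1 (Sum.inr k) i j,
   fun i j => (v.1 (Sum.inl i) j - v.1 (Sum.inl j) i) - ∑ k, y k * v.2.2 (Sum.inr k) i j,
   fun i₁ i₂ i₃ => v.2.1 (Sum.inr i₁) i₂ i₃ - v.2.1 (Sum.inr i₂) i₁ i₃
     + v.2.1 (Sum.inr i₃) i₁ i₂,
   fun i₁ i₂ i₃ => v.2.2 (Sum.inl i₁) i₂ i₃ - v.2.2 (Sum.inl i₂) i₁ i₃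
     + v.2.2 (Sum.inl i₃) i₁ i₂,
   fun i₁ i₂ i₃ =>
     (v.2.1 (Sum.inl i₁) i₂ i₃ - v.2.1 (Sum.inl i₂) i₁ i₃ + v.2.1 (Sum.inl i₃) i₁ i₂)
       + (v.2.2 (Sum.inr i₁) i₂ i₃ - v.2.2 (Sum.inr i₂) i₁ i₃ + v.2.2 (Sum.inr i₃) i₁ i₂))

noncomputable def cc {n : ℕ} (y : Vn n) : Fin n → ℝ := fun i => y i / ∑ j, y j * y j

noncomputable def ee {n : ℕ} (y : Vn n) (Δ : Fin n → Fin n → ℝ) (k : Fin n) : ℝ :=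
  ∑ m, y m * Δ m k

noncomputable def tcorr {n : ℕ} (y : Vn n) (Δ : Fin n → Fin n → ℝ) (i j k : Fin n) : ℝ :=
  cc y i * Δ j k + cc y j * Δ i k + cc y k * Δ i j
    - (cc y i * cc y j * ee y Δ k + cc y j * cc y k * ee y Δ i + cc y i * cc y k * ee y Δ j)
    + (∑ m, y m * ee y Δ m) * (cc y i * cc y j * cc y k)

lemma sum_sq_ne {n : ℕ} {y : Vn n} (hy : y ≠ 0) : (∑ j, y j * y j) ≠ 0 := by
  intro h
  apply hy
  funext i
  have := (Finset.sum_eq_zero_iff_of_nonneg (fun j _ => mul_self_nonneg (y j))).mp h i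
    (Finset.mem_univ i)
  have := mul_self_eq_zero.mp this
  simpa using this

lemma sum_y_cc {n : ℕ} {y : Vn n} (hy : y ≠ 0) : ∑ i, y i * cc y i = 1 := by
  simp only [cc, div_eq_mul_inv, ← mul_assoc]
  rw [← Finset.sum_mul, mul_inv_cancel₀ (sum_sq_ne hy)]

lemma tcorr_swap23 {n : ℕ} (y : Vn n) {Δ : Fin n → Fin n → ℝ}
    (hΔ : ∀ i k, Δ i k = Δ k i) (i j k : Fin n) :
    tcorr y Δ i j k = tcorr y Δ i k j := by
  simp only [tcorr, hΔ i j, hΔ i k, hΔ j k]; ring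

lemma tcorr_swap12 {n : ℕ} (y : Vn n) {Δ : Fin n → Fin n → ℝ}
    (hΔ : ∀ i k, Δ i k = Δ k i) (i j k : Fin n) :
    tcorr y Δ i j k = tcorr y Δ j i k := by
  simp only [tcorr, hΔ i j, hΔ i k, hΔ j k]; ring

lemma tcorr_swap13 {n : ℕ} (y : Vn n) {Δ : Fin n → Fin n → ℝ}
    (hΔ : ∀ i k, Δ i k = Δ k i) (i j k : Fin n) :
    tcorr y Δ i j k = tcorr y Δ k j i := by
  simp only [tcorr, hΔ i j, hΔ i k, hΔ j k]; ring

lemma tcorr_moment {n : ℕ} {y : Vn n} (hy : y ≠ 0) {Δ : Fin n → Fin n → ℝ}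
    (hΔ : ∀ i k, Δ i k = Δ k i) (i k : Fin n) :
    ∑ j, y j * tcorr y Δ i j k = Δ i k := by
  have key : ∀ j, y j * tcorr y Δ i j k =
      cc y i * (y j * Δ j k) + (y j * cc y j) * Δ i k + cc y k * (y j * Δ i j)
        - ((cc y i * ee y Δ k) * (y j * cc y j) + (cc y k * ee y Δ i) * (y j * cc y j)
            + (cc y i * cc y k) * (y j * ee y Δ j))
        + ((∑ m, y m * ee y Δ m) * (cc y i * cc y k)) * (y j * cc y j) := by
    intro j; simp only [tcorr]; ring
  rw [Finset.sum_congr rfl fun j _ => key j]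
  have h2 : ∑ j, y j * Δ i j = ee y Δ i := by
    simp only [ee]; exact Finset.sum_congr rfl fun j _ => by rw [hΔ i j]
  simp only [Finset.sum_add_distrib, Finset.sum_sub_distrib, ← Finset.mul_sum,
    ← Finset.sum_mul, sum_y_cc hy, h2]
  have h3 : ∑ j, y j * Δ j k = ee y Δ k := rfl
  rw [h3]; ring

noncomputable def S0 {n : ℕ} (B₁ : Idx n → Fin n → Fin n → ℝ) (i j k : Fin n) : ℝ :=
  (B₁ (Sum.inr i) j k + B₁ (Sum.inr j) i k) / 3

noncomputable def M0 {n : ℕ} (B₁ B₂ : Idx n → Fin n → Fin n → ℝ) (i j k : Fin n) : ℝ :=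
  B₁ (Sum.inl i) j k / 3 - B₁ (Sum.inl k) i j / 3 - B₂ (Sum.inr i) j k / 6
    + B₂ (Sum.inr j) i k / 2 + B₂ (Sum.inr k) i j / 6

noncomputable def P0 {n : ℕ} (B₂ : Idx n → Fin n → Fin n → ℝ) (i j k : Fin n) : ℝ :=
  (B₂ (Sum.inl i) j k + B₂ (Sum.inl j) i k) / 3

noncomputable def dS {n : ℕ} (y : Vn n) (A : Idx n → Fin n → ℝ)
    (B₁ : Idx n → Fin n → Fin n → ℝ) (i k : Fin n) : ℝ :=
  A (Sum.inr i) k - ∑ j, y j * S0 B₁ i j k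

noncomputable def dM {n : ℕ} (y : Vn n) (A : Idx n → Fin n → ℝ)
    (B₁ B₂ : Idx n → Fin n → Fin n → ℝ) (i k : Fin n) : ℝ :=
  A (Sum.inl i) k - ∑ j, y j * M0 B₁ B₂ i j k

noncomputable def Bsol {n : ℕ} (y : Vn n) (A : Idx n → Fin n → ℝ)
    (B₁ B₂ : Idx n → Fin n → Fin n → ℝ) : Idx n → Idx n → Fin n → ℝ :=
  fun a b => match a, b with
  | Sum.inl i, Sum.inl j => fun k => P0 B₂ i j k
  | Sum.inl i, Sum.inr j => fun k => M0 B₁ B₂ i j k + tcorr y (dM y A B₁ B₂) i j k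
  | Sum.inr j, Sum.inl i => fun k => M0 B₁ B₂ i j k + tcorr y (dM y A B₁ B₂) i j k
  | Sum.inr i, Sum.inr j => fun k => S0 B₁ i j k + tcorr y (dS y A B₁) i j k

/-- Exactness `ker τ = im σ²` of the sequence
`S²W*⊗(ℝⁿ)* →^{σ²} W*⊗((ℝⁿ)* ⊕ Λ²(ℝⁿ)* ⊕ Λ²(ℝⁿ)*) →^{τ} Λ² ⊕ Λ² ⊕ Λ³ ⊕ Λ³ ⊕ Λ³`,
where the `Λ²`-components `B₁, B₂` of an element of the middle space are
alternating. -/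
theorem tau_sigma2_exact {n : ℕ} (hn : 1 ≤ n) (y : Vn n) (hy : y ≠ 0)
    (A : Idx n → Fin n → ℝ) (B₁ B₂ : Idx n → Fin n → Fin n → ℝ)
    (hB₁ : ∀ w i j, B₁ w i j = - B₁ w j i)
    (hB₂ : ∀ w i j, B₂ w i j = - B₂ w j i) :
    tau y (A, B₁, B₂) = 0 ↔ ∃ B ∈ SymB n, sigma2 y B = (A, B₁, B₂) := by
  constructor
  · intro h
    simp only [tau, Prod.ext_iff, funext_iff, Prod.fst_zero, Prod.snd_zero,
      Pi.zero_apply] at h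
    obtain ⟨h1, h2, h3, h4, h5⟩ := h
    have hS2 : ∀ i j k, S0 B₁ i j k - S0 B₁ i k j = B₁ (Sum.inr i) j k := by
      intro i j k; simp only [S0]
      linarith [h3 i j k, hB₁ (Sum.inr i) j k, hB₁ (Sum.inr j) i k, hB₁ (Sum.inr k) i j]
    have hS3 : ∀ i j k, S0 B₁ i j k - S0 B₁ k j i = B₁ (Sum.inr j) i k := by
      intro i j k; simp only [S0]
      linarith [h3 i j k, hB₁ (Sum.inr i) j k, hB₁ (Sum.inr j) i k, hB₁ (Sum.inr k) i j]
    have hMA : ∀ i j k, M0 B₁ B₂ i j k - M0 B₁ B₂ i k j = B₁ (Sum.inl i) j k := by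
      intro i j k; simp only [M0]
      linarith [h5 i j k, hB₁ (Sum.inl i) j k, hB₁ (Sum.inl j) i k, hB₁ (Sum.inl k) i j,
        hB₂ (Sum.inr i) j k, hB₂ (Sum.inr j) i k, hB₂ (Sum.inr k) i j]
    have hMB : ∀ i j k, M0 B₁ B₂ i j k - M0 B₁ B₂ k j i = B₂ (Sum.inr j) i k := by
      intro i j k; simp only [M0]
      linarith [h5 i j k, hB₁ (Sum.inl i) j k, hB₁ (Sum.inl j) i k, hB₁ (Sum.inl k) i j,
        hB₂ (Sum.inr i) j k, hB₂ (Sum.inr j) i k, hB₂ (Sum.inr k) i j]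
    have hP2 : ∀ i j k, P0 B₂ i j k - P0 B₂ i k j = B₂ (Sum.inl i) j k := by
      intro i j k; simp only [P0]
      linarith [h4 i j k, hB₂ (Sum.inl i) j k, hB₂ (Sum.inl j) i k, hB₂ (Sum.inl k) i j]
    have hdS : ∀ i k, dS y A B₁ i k = dS y A B₁ k i := by
      intro i k
      have hs : ∑ j, y j * S0 B₁ i j k - ∑ j, y j * S0 B₁ k j i
          = ∑ j, y j * B₁ (Sum.inr j) i k := by
        rw [← Finset.sum_sub_distrib]
        exact Finset.sum_congr rfl fun j _ => by rw [← mul_sub, hS3 i j k]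
      simp only [dS]
      linarith [h1 i k, hs]
    have hdM : ∀ i k, dM y A B₁ B₂ i k = dM y A B₁ B₂ k i := by
      intro i k
      have hs : ∑ j, y j * M0 B₁ B₂ i j k - ∑ j, y j * M0 B₁ B₂ k j i
          = ∑ j, y j * B₂ (Sum.inr j) i k := by
        rw [← Finset.sum_sub_distrib]
        exact Finset.sum_congr rfl fun j _ => by rw [← mul_sub, hMB i j k]
      simp only [dM]
      linarith [h2 i k, hs]
    refine ⟨Bsol y A B₁ B₂, ?_, ?_⟩
    · intro a b
      rcases a with i | i <;> rcases b with j | j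
      · funext k; simp only [Bsol, P0]; ring
      · rfl
      · rfl
      · funext k
        simp only [Bsol]
        rw [tcorr_swap12 y hdS i j k]
        simp only [S0]; ring
    · simp only [sigma2, Prod.mk.injEq]
      refine ⟨?_, ?_, ?_⟩
      · funext a j
        rcases a with m | m
        · show ∑ i, y i * (M0 B₁ B₂ m i j + tcorr y (dM y A B₁ B₂) m i j) = A (Sum.inl m) j
          rw [Finset.sum_congr rfl fun i _ => mul_add (y i) _ _, Finset.sum_add_distrib,
            tcorr_moment hy hdM m j]
          simp only [dM]; ring
        · show ∑ i, y i * (S0 B₁ m i j + tcorr y (dS y A B₁) m i j) = A (Sum.inr m) j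
          rw [Finset.sum_congr rfl fun i _ => mul_add (y i) _ _, Finset.sum_add_distrib,
            tcorr_moment hy hdS m j]
          simp only [dS]; ring
      · funext a i j
        rcases a with m | m
        · show (M0 B₁ B₂ m i j + tcorr y (dM y A B₁ B₂) m i j)
            - (M0 B₁ B₂ m j i + tcorr y (dM y A B₁ B₂) m j i) = B₁ (Sum.inl m) i j
          rw [tcorr_swap23 y hdM m i j]
          linarith [hMA m i j]
        · show (S0 B₁ m i j + tcorr y (dS y A B₁) m i j)
            - (S0 B₁ m j i + tcorr y (dS y A B₁) m j i) = B₁ (Sum.inr m) i j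
          rw [tcorr_swap23 y hdS m i j]
          linarith [hS2 m i j]
      · funext a i j
        rcases a with m | m
        · show P0 B₂ m i j - P0 B₂ m j i = B₂ (Sum.inl m) i j
          linarith [hP2 m i j]
        · show (M0 B₁ B₂ i m j + tcorr y (dM y A B₁ B₂) i m j)
            - (M0 B₁ B₂ j m i + tcorr y (dM y A B₁ B₂) j m i) = B₂ (Sum.inr m) i j
          rw [tcorr_swap13 y hdM i m j]
          linarith [hMB i m j]
  · rintro ⟨B, hSym, hσ⟩
    simp only [sigma2, Prod.mk.injEq] at hσ
    obtain ⟨hA, hb1, hb2⟩ := hσ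
    subst hA hb1 hb2
    have hz : (0 : (Fin n → Fin n → ℝ) × (Fin n → Fin n → ℝ) × (Fin n → Fin n → Fin n → ℝ)
        × (Fin n → Fin n → Fin n → ℝ) × (Fin n → Fin n → Fin n → ℝ)) = (0, 0, 0, 0, 0) := rfl
    rw [hz]
    simp only [tau, Prod.mk.injEq]
    refine ⟨?_, ?_, ?_, ?_, ?_⟩
    · funext i j
      simp only [Pi.zero_apply]
      have e3 : ∑ k, y k * (B (Sum.inr k) (Sum.inr i) j - B (Sum.inr k) (Sum.inr j) i)
          = (∑ k, y k * B (Sum.inr i) (Sum.inr k) j) - ∑ k, y k * B (Sum.inr j) (Sum.inr k) i := by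
        rw [← Finset.sum_sub_distrib]
        refine Finset.sum_congr rfl fun k _ => ?_
        rw [hSym (Sum.inr k) (Sum.inr i), hSym (Sum.inr k) (Sum.inr j), mul_sub]
      rw [e3]; ring
    · funext i j
      simp only [Pi.zero_apply]
      have e3 : ∑ k, y k * (B (Sum.inr k) (Sum.inl i) j - B (Sum.inr k) (Sum.inl j) i)
          = (∑ k, y k * B (Sum.inl i) (Sum.inr k) j) - ∑ k, y k * B (Sum.inl j) (Sum.inr k) i := by
        rw [← Finset.sum_sub_distrib]
        refine Finset.sum_congr rfl fun k _ => ?_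
        rw [hSym (Sum.inr k) (Sum.inl i), hSym (Sum.inr k) (Sum.inl j), mul_sub]
      rw [e3]; ring
    · funext i₁ i₂ i₃
      simp only [Pi.zero_apply]
      rw [hSym (Sum.inr i₂) (Sum.inr i₁), hSym (Sum.inr i₃) (Sum.inr i₁),
        hSym (Sum.inr i₃) (Sum.inr i₂)]
      ring
    · funext i₁ i₂ i₃
      simp only [Pi.zero_apply]
      rw [hSym (Sum.inl i₂) (Sum.inl i₁), hSym (Sum.inl i₃) (Sum.inl i₁),
        hSym (Sum.inl i₃) (Sum.inl i₂)]
      ring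
    · funext i₁ i₂ i₃
      simp only [Pi.zero_apply]
      rw [hSym (Sum.inr i₁) (Sum.inl i₂), hSym (Sum.inr i₁) (Sum.inl i₃),
        hSym (Sum.inr i₂) (Sum.inl i₁), hSym (Sum.inr i₂) (Sum.inl i₃),
        hSym (Sum.inr i₃) (Sum.inl i₁), hSym (Sum.inr i₃) (Sum.inl i₂)]
      ring


end PM
end
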